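/- arXiv:2012.02872 — 5 statements merged into one kernel-verified Lean document; each statement's English description precedes it below -/
import Mathlib

section
/- Let G : ℝ^d → [0,∞] be measurable and let x₀ ∈ ℝ^d. Then ∫_{ℝ^d} Ψ(x, G(x)) dx < ∞ if and only if ∫_{ℝ^d} Ψ(x, G(x − x₀)) dx < ∞. (This is the key step proving that membership in H^log(ℝ^d) is translation invariant, since the maximal function M_φ commutes with translations.) -/
open MeasureTheory ENNReal

/-- `Ψ(x,t) = t / (log(e+t) + log(e+|x|))`, extended by `Ψ(x,∞) = ∞`. -/
noncomputable def PsiE {d : ℕ} (x : EuclideanSpace ℝ (Fin d)) (t : ℝ≥0∞) : ℝ≥0∞ :=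
  t / ENNReal.ofReal (Real.log (Real.exp 1 + t.toReal) + Real.log (Real.exp 1 + ‖x‖))

private lemma log_e_add_ge_one {a : ℝ} (ha : 0 ≤ a) : 1 ≤ Real.log (Real.exp 1 + a) := by
  have : Real.exp 1 ≤ Real.exp 1 + a := by linarith
  calc (1:ℝ) = Real.log (Real.exp 1) := (Real.log_exp 1).symm
    _ ≤ _ := Real.log_le_log (Real.exp_pos 1) this

/-- Comparison lemma: `Ψ(x,t) ≤ (1 + log(e+‖z‖)) · Ψ(x+z, t)`. -/
private lemma PsiE_le {d : ℕ} (x z : EuclideanSpace ℝ (Fin d)) (t : ℝ≥0∞) :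
    PsiE x t ≤ ENNReal.ofReal (1 + Real.log (Real.exp 1 + ‖z‖)) * PsiE (x + z) t := by
  set L : ℝ := Real.log (Real.exp 1 + ‖z‖) with hL
  set D : ℝ := Real.log (Real.exp 1 + t.toReal) + Real.log (Real.exp 1 + ‖x‖) with hD
  set D' : ℝ := Real.log (Real.exp 1 + t.toReal) + Real.log (Real.exp 1 + ‖x + z‖) with hD'
  have hL1 : 1 ≤ L := log_e_add_ge_one (norm_nonneg z)
  have hD1 : 1 ≤ D := by
    have h1 := log_e_add_ge_one (ENNReal.toReal_nonneg (a := t))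
    have h2 := log_e_add_ge_one (norm_nonneg x)
    simp only [hD]; linarith
  -- key real inequality : D' ≤ (1 + L) * D
  have hkey : D' ≤ (1 + L) * D := by
    have h3 : Real.log (Real.exp 1 + ‖x + z‖) ≤ Real.log (Real.exp 1 + ‖x‖) + L := by
      have hle : Real.exp 1 + ‖x + z‖ ≤ (Real.exp 1 + ‖x‖) * (Real.exp 1 + ‖z‖) := by
        have htri : ‖x + z‖ ≤ ‖x‖ + ‖z‖ := norm_add_le x z
        have he : (1:ℝ) ≤ Real.exp 1 := by
          have := Real.add_one_le_exp (1:ℝ); linarith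
        nlinarith [norm_nonneg x, norm_nonneg z]
      calc Real.log (Real.exp 1 + ‖x + z‖)
          ≤ Real.log ((Real.exp 1 + ‖x‖) * (Real.exp 1 + ‖z‖)) := by
            apply Real.log_le_log (by positivity) hle
        _ = Real.log (Real.exp 1 + ‖x‖) + L := by
            rw [Real.log_mul (by positivity) (by positivity)]
    have : D' ≤ D + L := by simp only [hD, hD']; linarith
    nlinarith
  set c : ℝ≥0∞ := ENNReal.ofReal (1 + L) with hc
  have hc0 : c ≠ 0 := by
    simp only [hc, ne_eq, ENNReal.ofReal_eq_zero, not_le]; linarith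
  have hctop : c ≠ ⊤ := ENNReal.ofReal_ne_top
  have hden : ENNReal.ofReal D' ≤ c * ENNReal.ofReal D := by
    rw [hc, ← ENNReal.ofReal_mul (by linarith)]
    exact ENNReal.ofReal_le_ofReal hkey
  calc PsiE x t = t / ENNReal.ofReal D := rfl
    _ = c * t / (c * ENNReal.ofReal D) := (ENNReal.mul_div_mul_left _ _ hc0 hctop).symm
    _ ≤ c * t / ENNReal.ofReal D' := ENNReal.div_le_div_left hden _
    _ = c * (t / ENNReal.ofReal D') := by rw [mul_div_assoc]
    _ = c * PsiE (x + z) t := rfl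

/-- Translation invariance of the `L_Ψ(ℝ^d)` finiteness condition. -/
theorem stmt4 {d : ℕ} (G : EuclideanSpace ℝ (Fin d) → ℝ≥0∞) (hG : Measurable G)
    (x₀ : EuclideanSpace ℝ (Fin d)) :
    (∫⁻ x, PsiE x (G x)) < ⊤ ↔ (∫⁻ x, PsiE x (G (x - x₀))) < ⊤ := by
  have htrans : (∫⁻ x, PsiE x (G (x - x₀))) = ∫⁻ x, PsiE (x + x₀) (G x) := by
    have := lintegral_sub_right_eq_self (μ := (volume : Measure (EuclideanSpace ℝ (Fin d))))
      (fun x => PsiE (x + x₀) (G x)) x₀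
    simp only [sub_add_cancel] at this
    exact this
  rw [htrans]
  constructor
  · intro h
    have hbound : ∀ x, PsiE (x + x₀) (G x) ≤
        ENNReal.ofReal (1 + Real.log (Real.exp 1 + ‖-x₀‖)) * PsiE x (G x) := by
      intro x
      have := PsiE_le (x + x₀) (-x₀) (G x)
      simpa using this
    calc (∫⁻ x, PsiE (x + x₀) (G x)) ≤
        ∫⁻ x, ENNReal.ofReal (1 + Real.log (Real.exp 1 + ‖-x₀‖)) * PsiE x (G x) :=
          lintegral_mono hbound
      _ = ENNReal.ofReal (1 + Real.log (Real.exp 1 + ‖-x₀‖)) * ∫⁻ x, PsiE x (G x) :=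
          lintegral_const_mul' _ _ ENNReal.ofReal_ne_top
      _ < ⊤ := ENNReal.mul_lt_top ENNReal.ofReal_lt_top h
  · intro h
    have hbound : ∀ x, PsiE x (G x) ≤
        ENNReal.ofReal (1 + Real.log (Real.exp 1 + ‖x₀‖)) * PsiE (x + x₀) (G x) :=
      fun x => PsiE_le x x₀ (G x)
    calc (∫⁻ x, PsiE x (G x)) ≤
        ∫⁻ x, ENNReal.ofReal (1 + Real.log (Real.exp 1 + ‖x₀‖)) * PsiE (x + x₀) (G x) :=
          lintegral_mono hbound
      _ = ENNReal.ofReal (1 + Real.log (Real.exp 1 + ‖x₀‖)) * ∫⁻ x, PsiE (x + x₀) (G x) :=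
          lintegral_const_mul' _ _ ENNReal.ofReal_ne_top
      _ < ⊤ := ENNReal.mul_lt_top ENNReal.ofReal_lt_top h
end

section
/- Let f ∈ L¹(ℝ^d) be compactly supported and suppose that ∫_{ℝ^d} Ψ(x, M_φ(f)(x)) dx < ∞. Then ∫_{ℝ^d} f(x) dx = 0. -/
set_option maxHeartbeats 1000000

open MeasureTheory Metric ENNReal Pointwise

/-- The smooth maximal function `M_φ f (x) = sup_{ε>0} |(f ∗ φ_ε)(x)|`, where
`φ_ε(x) = ε^{-d} φ(x/ε)`. -/
noncomputable def MphiFn {d : ℕ} (φ : EuclideanSpace ℝ (Fin d) → ℝ)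
    (f : EuclideanSpace ℝ (Fin d) → ℝ) (x : EuclideanSpace ℝ (Fin d)) : ℝ≥0∞ :=
  ⨆ (ε : ℝ) (_ : 0 < ε),
    ENNReal.ofReal |∫ y, f y * ((ε ^ d)⁻¹ * φ (ε⁻¹ • (x - y)))|

lemma two_le_e : (2:ℝ) ≤ Real.exp 1 := by
  have := Real.exp_one_gt_d9; linarith

lemma one_le_log_e_add {s : ℝ} (hs : 0 ≤ s) : 1 ≤ Real.log (Real.exp 1 + s) := by
  have h1 : Real.log (Real.exp 1) = 1 := Real.log_exp 1
  calc (1:ℝ) = Real.log (Real.exp 1) := h1.symm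
  _ ≤ Real.log (Real.exp 1 + s) :=
      Real.log_le_log (Real.exp_pos 1) (by linarith)

lemma log_e_add_le_two {s : ℝ} (h0 : 0 ≤ s) (h1 : s ≤ 1) :
    Real.log (Real.exp 1 + s) ≤ 2 := by
  have he : (2:ℝ) ≤ Real.exp 1 := two_le_e
  have h2 : Real.exp 1 + s ≤ Real.exp 2 := by
    have : Real.exp 2 = Real.exp 1 * Real.exp 1 := by
      rw [← Real.exp_add]; norm_num
    nlinarith [Real.exp_pos 1]
  calc Real.log (Real.exp 1 + s) ≤ Real.log (Real.exp 2) :=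
        Real.log_le_log (by positivity) h2
  _ = 2 := Real.log_exp 2

lemma log_e_add_le_two_mul {s : ℝ} (h1 : 1 ≤ s) :
    Real.log (Real.exp 1 + s) ≤ 2 * s := by
  have h2 : Real.exp 1 + s ≤ Real.exp 1 * (1 + s) := by
    nlinarith [two_le_e]
  calc Real.log (Real.exp 1 + s) ≤ Real.log (Real.exp 1 * (1 + s)) :=
        Real.log_le_log (by positivity) h2
  _ = 1 + Real.log (1 + s) := by
      rw [Real.log_mul (Real.exp_ne_zero 1) (by linarith), Real.log_exp]
  _ ≤ 1 + s := by
      have := Real.log_le_sub_one_of_pos (x := 1 + s) (by linarith)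
      linarith
  _ ≤ 2 * s := by linarith

lemma psiE_top {d : ℕ} (x : EuclideanSpace ℝ (Fin d)) : PsiE x ⊤ = ⊤ := by
  have hB : 1 ≤ Real.log (Real.exp 1 + ‖x‖) := one_le_log_e_add (norm_nonneg x)
  rw [PsiE]
  rw [ENNReal.top_div_of_ne_top (by exact ENNReal.ofReal_ne_top)]

lemma psiE_lower {d : ℕ} (x : EuclideanSpace ℝ (Fin d)) (t : ℝ≥0∞) (t₀ : ℝ)
    (h0 : 0 < t₀) (h1 : t₀ ≤ 1) (ht : ENNReal.ofReal t₀ ≤ t) :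
    ENNReal.ofReal t₀ / ENNReal.ofReal (2 + Real.log (Real.exp 1 + ‖x‖)) ≤ PsiE x t := by
  set B := Real.log (Real.exp 1 + ‖x‖) with hBdef
  have hB : 1 ≤ B := one_le_log_e_add (norm_nonneg x)
  rcases eq_or_ne t ⊤ with rfl | htop
  · rw [psiE_top]; exact le_top
  · set s := t.toReal with hsdef
    have hs0 : 0 ≤ s := ENNReal.toReal_nonneg
    have hts : t = ENNReal.ofReal s := (ENNReal.ofReal_toReal htop).symm
    have hst : t₀ ≤ s := by
      rw [hts] at ht
      exact (ENNReal.ofReal_le_ofReal_iff hs0).mp ht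
    rw [PsiE, ← hsdef, hts]
    set L := Real.log (Real.exp 1 + s) + B with hLdef
    have hL1 : 1 ≤ Real.log (Real.exp 1 + s) := one_le_log_e_add hs0
    have hLpos : 0 < L := by rw [hLdef]; linarith
    have hApos : 0 < 2 + B := by linarith
    rw [← ENNReal.ofReal_div_of_pos hApos, ← ENNReal.ofReal_div_of_pos hLpos]
    apply ENNReal.ofReal_le_ofReal
    rw [div_le_div_iff₀ hApos hLpos]
    rcases le_or_gt s 1 with hs1 | hs1
    · have := log_e_add_le_two hs0 hs1
      nlinarith
    · have := log_e_add_le_two_mul hs1.le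
      nlinarith

lemma tsum_inv_linear_top (K : ℝ) (hK : 0 < K) :
    ∑' n : ℕ, (ENNReal.ofReal (K * (n + 1)))⁻¹ = ⊤ := by
  by_contra h
  have hsum : Summable fun n : ℕ => ((ENNReal.ofReal (K * (n + 1)))⁻¹).toReal :=
    ENNReal.summable_toReal h
  have heq : ∀ n : ℕ, ((ENNReal.ofReal (K * (n + 1)))⁻¹).toReal = (K * (n + 1))⁻¹ := by
    intro n
    have hpos : 0 < K * (n + 1) := by positivity
    rw [← ENNReal.ofReal_inv_of_pos hpos, ENNReal.toReal_ofReal (by positivity)]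
  rw [funext heq] at hsum
  have h2 : Summable fun n : ℕ => ((n : ℝ) + 1)⁻¹ := by
    have := hsum.mul_left K
    refine this.congr fun n => ?_
    field_simp
  have h3 : Summable fun n : ℕ => ((n : ℝ))⁻¹ := by
    refine (summable_nat_add_iff 1).mp ?_
    refine h2.congr fun n => ?_
    push_cast
    ring
  exact Real.not_summable_natCast_inv h3

/-- A compactly supported integrable function in `H^log(ℝ^d)` has vanishing mean. -/
theorem stmt5 {d : ℕ} (hd : 1 ≤ d)
    (φ : EuclideanSpace ℝ (Fin d) → ℝ) (c : ℝ)
    (hφsmooth : ContDiff ℝ (⊤ : ℕ∞) φ) (hφnonneg : ∀ x, 0 ≤ φ x)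
    (hφsupp : Function.support φ ⊆ closedBall 0 1)
    (hφint : ∫ x, φ x = 1)
    (hφconst : ∀ x : EuclideanSpace ℝ (Fin d), ‖x‖ ≤ 1 / 2 → φ x = c)
    (f : EuclideanSpace ℝ (Fin d) → ℝ) (hf : Integrable f)
    (hcompact : HasCompactSupport f)
    (hHlog : (∫⁻ x, PsiE x (MphiFn φ f x)) < ⊤) :
    ∫ x, f x = 0 := by
  by_contra hI0
  set I := ∫ x, f x with hIdef
  have hIpos : 0 < |I| := abs_pos.mpr hI0
  haveI : Nonempty (Fin d) := ⟨⟨0, hd⟩⟩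
  have hφcs : HasCompactSupport φ :=
    HasCompactSupport.intro (isCompact_closedBall (0 : EuclideanSpace ℝ (Fin d)) 1)
      (fun x hx => Function.notMem_support.mp (fun h => hx (hφsupp h)))
  obtain ⟨Lnn, hLip⟩ := hφsmooth.lipschitzWith_of_hasCompactSupport hφcs (by simp)
  set L := (Lnn : ℝ) with hLdef
  have hL0 : 0 ≤ L := Lnn.coe_nonneg
  obtain ⟨Cφ, hCφ⟩ := hφcs.exists_bound_of_continuous hφsmooth.continuous
  -- a point x₀ ≠ 0 where φ is positive
  obtain ⟨x₀, hx₀ne, hb⟩ : ∃ x₀ : EuclideanSpace ℝ (Fin d), x₀ ≠ 0 ∧ 0 < φ x₀ := by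
    by_contra hcon
    push_neg at hcon
    have hz : ∀ x : EuclideanSpace ℝ (Fin d), x ≠ 0 → φ x = 0 :=
      fun x hx => le_antisymm (hcon x hx) (hφnonneg x)
    have hzero : ∫ x, φ x = 0 := by
      have hae : φ =ᵐ[volume] 0 := by
        filter_upwards [compl_mem_ae_iff.mpr
          (measure_singleton (0 : EuclideanSpace ℝ (Fin d)))] with x hx
        exact hz x hx
      rw [integral_congr_ae hae]
      simp
    rw [hφint] at hzero; norm_num at hzero
  set b := φ x₀ with hbdef
  have hx₀pos : 0 < ‖x₀‖ := norm_pos_iff.mpr hx₀ne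
  -- δ
  obtain ⟨δ, hδpos, hδ⟩ : ∃ δ > 0, ∀ z, dist z x₀ < δ → b / 2 < φ z := by
    have hopen : IsOpen {z : EuclideanSpace ℝ (Fin d) | b / 2 < φ z} :=
      isOpen_lt continuous_const hφsmooth.continuous
    obtain ⟨δ, hδpos, hδ⟩ := Metric.isOpen_iff.mp hopen x₀ (by simp only [Set.mem_setOf_eq]; linarith)
    exact ⟨δ, hδpos, fun z hz => hδ hz⟩
  -- R
  obtain ⟨R₀, hR₀⟩ := hcompact.isCompact.isBounded.subset_closedBall 0
  set R := max R₀ 1 with hRdef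
  have hR1 : (1:ℝ) ≤ R := le_max_right _ _
  have hRpos : (0:ℝ) < R := lt_of_lt_of_le one_pos hR1
  have hRf : ∀ y, f y ≠ 0 → ‖y‖ ≤ R := by
    intro y hy
    have h1 : y ∈ tsupport f := subset_tsupport f (Function.mem_support.mpr hy)
    have h2 := hR₀ h1
    rw [mem_closedBall_zero_iff] at h2
    exact le_trans h2 (le_max_left _ _)
  set N := ∫ y, |f y| with hNdef
  have hN0 : 0 ≤ N := integral_nonneg (fun y => abs_nonneg _)
  set κ₀ := b * |I| / 4 with hκ₀def
  have hκ₀pos : 0 < κ₀ := by rw [hκ₀def]; positivity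
  set ε₁ := 1 + 4 * L * R * N / (b * |I|) with hε₁def
  have hε₁ge1 : (1:ℝ) ≤ ε₁ := by
    rw [hε₁def]
    have : 0 ≤ 4 * L * R * N / (b * |I|) := by positivity
    linarith
  -- KEY estimate
  have key : ∀ ε : ℝ, ε₁ ≤ ε → ∀ x : EuclideanSpace ℝ (Fin d), dist (ε⁻¹ • x) x₀ < δ →
      ENNReal.ofReal (κ₀ / ε ^ d) ≤ MphiFn φ f x := by
    intro ε hε x hx
    have hεpos : 0 < ε := lt_of_lt_of_le one_pos (le_trans hε₁ge1 hε)
    set w := ε⁻¹ • x with hwdef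
    have hφw : b / 2 < φ w := hδ _ hx
    have hrw : ∀ y : EuclideanSpace ℝ (Fin d), f y * ((ε ^ d)⁻¹ * φ (ε⁻¹ • (x - y)))
        = (ε ^ d)⁻¹ * (f y * φ w + f y * (φ (w - ε⁻¹ • y) - φ w)) := by
      intro y
      have h1 : ε⁻¹ • (x - y) = w - ε⁻¹ • y := by rw [hwdef, smul_sub]
      rw [h1]; ring
    have hint1 : Integrable (fun y => f y * φ w) := hf.mul_const _
    have hint2 : Integrable (fun y => φ (w - ε⁻¹ • y) * f y) := by
      have hc : Continuous fun y : EuclideanSpace ℝ (Fin d) => φ (w - ε⁻¹ • y) :=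
        hφsmooth.continuous.comp (continuous_const.sub (continuous_const.fun_smul continuous_id))
      exact hf.bdd_mul (c := Cφ) hc.aestronglyMeasurable (Filter.Eventually.of_forall fun y => hCφ _)
    have hint2' : Integrable (fun y => f y * (φ (w - ε⁻¹ • y) - φ w)) := by
      have h10 : Integrable (fun y => f y * φ (w - ε⁻¹ • y)) := by
        refine hint2.congr ?_
        filter_upwards with y using mul_comm _ _
      refine (h10.sub hint1).congr ?_
      filter_upwards with y
      simp [mul_sub]
    set E := ∫ y, f y * (φ (w - ε⁻¹ • y) - φ w) with hEdef
    have hconv : ∫ y, f y * ((ε ^ d)⁻¹ * φ (ε⁻¹ • (x - y)))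
        = (ε ^ d)⁻¹ * (I * φ w + E) := by
      rw [funext hrw, integral_const_mul, integral_add hint1 hint2', integral_mul_const]
    -- error bound
    have hE : |E| ≤ L * R * N / ε := by
      have hbpt : ∀ y : EuclideanSpace ℝ (Fin d),
          ‖f y * (φ (w - ε⁻¹ • y) - φ w)‖ ≤ L * R / ε * |f y| := by
        intro y
        rw [norm_mul, Real.norm_eq_abs, Real.norm_eq_abs]
        rcases eq_or_ne (f y) 0 with h0 | h0
        · simp [h0]
        · have hy := hRf y h0
          have hd1 : |φ (w - ε⁻¹ • y) - φ w| ≤ L * (‖y‖ / ε) := by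
            have h2 := hLip.dist_le_mul (w - ε⁻¹ • y) w
            rw [Real.dist_eq] at h2
            have h3 : dist (w - ε⁻¹ • y) w = ‖y‖ / ε := by
              rw [dist_self_sub_left, norm_smul, norm_inv, Real.norm_eq_abs,
                abs_of_pos hεpos, div_eq_inv_mul]
            rw [h3] at h2
            exact h2
          have h4 : |φ (w - ε⁻¹ • y) - φ w| ≤ L * R / ε := by
            refine le_trans hd1 ?_
            calc L * (‖y‖ / ε) ≤ L * (R / ε) := by gcongr
            _ = L * R / ε := by ring
          calc |f y| * |φ (w - ε⁻¹ • y) - φ w| ≤ |f y| * (L * R / ε) := by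
                gcongr
          _ = L * R / ε * |f y| := mul_comm _ _
      calc |E| ≤ ∫ y, ‖f y * (φ (w - ε⁻¹ • y) - φ w)‖ := by
            rw [hEdef, ← Real.norm_eq_abs]
            exact norm_integral_le_integral_norm _
      _ ≤ ∫ y, L * R / ε * |f y| := by
          refine integral_mono_of_nonneg (Filter.Eventually.of_forall fun y => norm_nonneg _)
            ((hf.abs.const_mul _)) (Filter.Eventually.of_forall hbpt)
      _ = L * R * N / ε := by
          rw [integral_const_mul, ← hNdef]; ring
    -- lower bound for the convolution
    have hεmul : L * R * N / ε ≤ b * |I| / 4 := by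
      have hbI : 0 < b * |I| := mul_pos hb hIpos
      have h5 : ε₁ * (b * |I|) = b * |I| + 4 * L * R * N := by
        rw [hε₁def]; field_simp
      have h6 : b * |I| + 4 * L * R * N ≤ ε * (b * |I|) := by
        calc b * |I| + 4 * L * R * N = ε₁ * (b * |I|) := h5.symm
        _ ≤ ε * (b * |I|) := by gcongr
      rw [div_le_iff₀ hεpos]
      nlinarith
    have hJ : κ₀ / ε ^ d ≤ |∫ y, f y * ((ε ^ d)⁻¹ * φ (ε⁻¹ • (x - y)))| := by
      rw [hconv, abs_mul, abs_inv, abs_pow, abs_of_pos hεpos]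
      have habs : |I| * φ w - |E| ≤ |I * φ w + E| := by
        have h7 : |I * φ w| ≤ |I * φ w + E| + |E| := by
          calc |I * φ w| = |(I * φ w + E) + (-E)| := by rw [add_neg_cancel_right]
          _ ≤ |I * φ w + E| + |-E| := abs_add_le _ _
          _ = |I * φ w + E| + |E| := by rw [abs_neg]
        rw [abs_mul, abs_of_pos (lt_trans (by linarith) hφw)] at h7
        linarith
      have h8 : κ₀ ≤ |I * φ w + E| := by
        have h9 : |I| * (b / 2) ≤ |I| * φ w := mul_le_mul_of_nonneg_left hφw.le (abs_nonneg _)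
        rw [hκ₀def]
        nlinarith [abs_nonneg E]
      rw [div_eq_mul_inv, mul_comm]
      exact mul_le_mul_of_nonneg_left h8 (by positivity)
    calc ENNReal.ofReal (κ₀ / ε ^ d)
        ≤ ENNReal.ofReal |∫ y, f y * ((ε ^ d)⁻¹ * φ (ε⁻¹ • (x - y)))| :=
          ENNReal.ofReal_le_ofReal hJ
    _ ≤ MphiFn φ f x := by
        rw [MphiFn]
        exact le_iSup₂ (f := fun (ε : ℝ) (_ : 0 < ε) =>
          ENNReal.ofReal |∫ y, f y * ((ε ^ d)⁻¹ * φ (ε⁻¹ • (x - y)))|) ε hεpos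
  -- the cone
  set F : EuclideanSpace ℝ (Fin d) → EuclideanSpace ℝ (Fin d) :=
    fun x => (‖x₀‖ / ‖x‖) • x with hFdef
  set C : Set (EuclideanSpace ℝ (Fin d)) := {x | 0 < ‖x‖} ∩ F ⁻¹' (ball x₀ δ) with hCdef
  have hCopen : IsOpen C := by
    have h1 : IsOpen {x : EuclideanSpace ℝ (Fin d) | 0 < ‖x‖} :=
      isOpen_lt continuous_const continuous_norm
    have hFcont : ContinuousOn F {x : EuclideanSpace ℝ (Fin d) | 0 < ‖x‖} := by
      apply ContinuousOn.fun_smul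
      · exact continuousOn_const.div continuous_norm.continuousOn (fun x hx => ne_of_gt hx)
      · exact continuousOn_id
    exact hFcont.isOpen_inter_preimage h1 isOpen_ball
  have hCscale : ∀ (ρ : ℝ), 0 < ρ → ∀ x ∈ C, ρ • x ∈ C := by
    intro ρ hρ x hxC
    obtain ⟨hx1, hx2⟩ := hxC
    have hxn : (0:ℝ) < ‖x‖ := hx1
    constructor
    · show (0:ℝ) < ‖ρ • x‖
      rw [norm_smul, Real.norm_eq_abs, abs_of_pos hρ]
      positivity
    · show F (ρ • x) ∈ ball x₀ δ
      have hFeq : F (ρ • x) = F x := by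
        rw [hFdef]
        simp only
        rw [norm_smul, Real.norm_eq_abs, abs_of_pos hρ, smul_smul]
        congr 1
        field_simp
      rw [hFeq]
      exact hx2
  set R₁ := ‖x₀‖ * ε₁ with hR₁def
  set κ := κ₀ * ‖x₀‖ ^ d with hκdef
  have hκpos : 0 < κ := by rw [hκdef]; positivity
  have key2 : ∀ x ∈ C, R₁ ≤ ‖x‖ → ENNReal.ofReal (κ / ‖x‖ ^ d) ≤ MphiFn φ f x := by
    intro x hxC hxR
    obtain ⟨hx1, hx2⟩ := hxC
    have hxn : (0:ℝ) < ‖x‖ := hx1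
    set ε := ‖x‖ / ‖x₀‖ with hεdef
    have hεpos : (0:ℝ) < ε := by rw [hεdef]; positivity
    have hεge : ε₁ ≤ ε := by
      rw [hεdef, le_div_iff₀ hx₀pos]
      rw [hR₁def] at hxR
      linarith
    have hinv : ε⁻¹ • x = F x := by
      rw [hFdef, hεdef]
      simp only
      rw [inv_div]
    have hdist : dist (ε⁻¹ • x) x₀ < δ := by
      rw [hinv]
      exact hx2
    have hk := key ε hεge x hdist
    have heq : κ₀ / ε ^ d = κ / ‖x‖ ^ d := by
      rw [hεdef, div_pow, div_div_eq_mul_div, hκdef]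
    rw [heq] at hk
    exact hk
  -- the annuli
  set S : Set (EuclideanSpace ℝ (Fin d)) := C ∩ ({x | 1 < ‖x‖} ∩ {x | ‖x‖ < 2}) with hSdef
  have hSopen : IsOpen S := by
    refine hCopen.inter (IsOpen.inter ?_ ?_)
    · exact isOpen_lt continuous_const continuous_norm
    · exact isOpen_lt continuous_norm continuous_const
  have hx₀C : x₀ ∈ C := by
    constructor
    · exact hx₀pos
    · show F x₀ ∈ ball x₀ δ
      have : F x₀ = x₀ := by
        rw [hFdef]
        simp only
        rw [div_self (ne_of_gt hx₀pos), one_smul]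
      rw [this]
      exact mem_ball_self hδpos
  have hSne : S.Nonempty := by
    refine ⟨(3 / 2 * ‖x₀‖⁻¹) • x₀, ?_, ?_, ?_⟩
    · exact hCscale _ (by positivity) x₀ hx₀C
    all_goals
      show _ ; rw [Set.mem_setOf_eq, norm_smul, Real.norm_eq_abs,
        abs_of_pos (by positivity : (0:ℝ) < 3 / 2 * ‖x₀‖⁻¹)]
    · rw [mul_assoc, inv_mul_cancel₀ (ne_of_gt hx₀pos)]
      norm_num
    · rw [mul_assoc, inv_mul_cancel₀ (ne_of_gt hx₀pos)]
      norm_num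
  set V := volume S with hVdef
  have hVpos : 0 < V := hSopen.measure_pos volume hSne
  set M : ℝ := max R₁ (max 1 κ) with hMdef
  have hM1 : (1:ℝ) ≤ M := le_trans (le_max_left _ _) (le_max_right _ _)
  have hMR₁ : R₁ ≤ M := le_max_left _ _
  have hMκ : κ ≤ M := le_trans (le_max_right _ _) (le_max_right _ _)
  have hMpos : (0:ℝ) < M := lt_of_lt_of_le one_pos hM1
  set r : ℕ → ℝ := fun n => M * 2 ^ n with hrdef
  have hrpos : ∀ n, 0 < r n := fun n => by rw [hrdef]; positivity
  have hr1 : ∀ n, M ≤ r n := by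
    intro n
    rw [hrdef]
    simp only
    have h2 : (1:ℝ) ≤ 2 ^ n := by
      induction n with
      | zero => norm_num
      | succ k ih =>
        rw [pow_succ]
        nlinarith
    nlinarith
  have hrsucc : ∀ n, r (n + 1) = 2 * r n := by
    intro n
    rw [hrdef]
    simp only [pow_succ]
    ring
  set A : ℕ → Set (EuclideanSpace ℝ (Fin d)) := fun n => (r n) • S with hAdef
  have hAmeas : ∀ n, MeasurableSet (A n) := fun n =>
    (hSopen.smul₀ (ne_of_gt (hrpos n))).measurableSet
  have hAprop : ∀ n, ∀ x ∈ A n, x ∈ C ∧ r n < ‖x‖ ∧ ‖x‖ < r (n + 1) := by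
    intro n x hx
    obtain ⟨y, hyS, hyx⟩ := hx
    obtain ⟨hyC, hy1, hy2⟩ := hyS
    rw [Set.mem_setOf_eq] at hy1 hy2
    have hxn : ‖x‖ = r n * ‖y‖ := by
      rw [← hyx, norm_smul, Real.norm_eq_abs, abs_of_pos (hrpos n)]
    refine ⟨?_, ?_, ?_⟩
    · rw [← hyx]
      exact hCscale _ (hrpos n) y hyC
    · rw [hxn]
      nlinarith [hrpos n]
    · rw [hxn, hrsucc n]
      nlinarith [hrpos n]
  have hAdisj : Pairwise (Function.onFun Disjoint A) := by
    have hmono : ∀ m n : ℕ, m < n → ∀ x ∈ A m, x ∉ A n := by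
      intro m n hmn x hxm hxn
      obtain ⟨_, _, h2⟩ := hAprop m x hxm
      obtain ⟨_, h3, _⟩ := hAprop n x hxn
      have hle : r (m + 1) ≤ r n := by
        rw [hrdef]
        simp only
        gcongr
        · exact one_le_two
        · omega
      linarith
    intro m n hmn
    rcases lt_or_gt_of_ne hmn with h | h
    · exact Set.disjoint_left.mpr (fun x hx hx' => hmono m n h x hx hx')
    · exact Set.disjoint_right.mpr (fun x hx hx' => hmono n m h x hx hx')
  have hAvol : ∀ n, volume (A n) = ENNReal.ofReal (r n ^ d) * V := by
    intro n
    rw [hAdef]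
    simp only
    rw [Measure.addHaar_smul_of_nonneg volume (hrpos n).le S,
      finrank_euclideanSpace_fin, hVdef]
  -- per-annulus lower bound
  set D : ℕ → ℝ := fun n => 2 + Real.log (Real.exp 1 + r (n + 1)) with hDdef
  have hbound : ∀ n, ENNReal.ofReal (κ / r (n + 1) ^ d) / ENNReal.ofReal (D n) * volume (A n)
      ≤ ∫⁻ x in A n, PsiE x (MphiFn φ f x) := by
    intro n
    set t₀ := κ / r (n + 1) ^ d with ht₀def
    have ht₀pos : 0 < t₀ := by rw [ht₀def]; positivity
    have ht₀le1 : t₀ ≤ 1 := by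
      rw [ht₀def, div_le_one (by positivity)]
      calc κ ≤ M := hMκ
      _ ≤ r (n + 1) := hr1 (n + 1)
      _ ≤ r (n + 1) ^ d := le_self_pow₀ (le_trans hM1 (hr1 _)) (by omega)
    have hpt : ∀ x ∈ A n,
        ENNReal.ofReal t₀ / ENNReal.ofReal (D n) ≤ PsiE x (MphiFn φ f x) := by
      intro x hx
      obtain ⟨hxC, hxlo, hxhi⟩ := hAprop n x hx
      have hxR₁ : R₁ ≤ ‖x‖ := le_trans (le_trans hMR₁ (hr1 n)) hxlo.le
      have hxpos : (0:ℝ) < ‖x‖ := lt_of_lt_of_le (hrpos n) hxlo.le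
      have hkey := key2 x hxC hxR₁
      have hmono : ENNReal.ofReal t₀ ≤ ENNReal.ofReal (κ / ‖x‖ ^ d) := by
        apply ENNReal.ofReal_le_ofReal
        rw [ht₀def]
        have hple : ‖x‖ ^ d ≤ r (n + 1) ^ d := pow_le_pow_left₀ (norm_nonneg x) hxhi.le d
        gcongr
      have h1 := psiE_lower x (MphiFn φ f x) t₀ ht₀pos ht₀le1 (le_trans hmono hkey)
      refine le_trans ?_ h1
      refine ENNReal.div_le_div_left (ENNReal.ofReal_le_ofReal ?_) _
      rw [hDdef]
      simp only
      have : Real.log (Real.exp 1 + ‖x‖) ≤ Real.log (Real.exp 1 + r (n + 1)) :=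
        Real.log_le_log (by positivity) (by linarith)
      linarith
    calc ENNReal.ofReal t₀ / ENNReal.ofReal (D n) * volume (A n)
        = ∫⁻ _ in A n, ENNReal.ofReal t₀ / ENNReal.ofReal (D n) :=
          (setLIntegral_const _ _).symm
    _ ≤ ∫⁻ x in A n, PsiE x (MphiFn φ f x) := by
        refine lintegral_mono_ae ?_
        rw [ae_restrict_iff' (hAmeas n)]
        exact Filter.Eventually.of_forall hpt
  -- summing up
  have htot : (∫⁻ x, PsiE x (MphiFn φ f x)) = ⊤ := by
    rw [← top_le_iff]
    have h1 : ∑' n, (ENNReal.ofReal (κ / r (n + 1) ^ d) / ENNReal.ofReal (D n) * volume (A n))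
        ≤ ∫⁻ x, PsiE x (MphiFn φ f x) := by
      calc ∑' n, (ENNReal.ofReal (κ / r (n + 1) ^ d) / ENNReal.ofReal (D n) * volume (A n))
          ≤ ∑' n, ∫⁻ x in A n, PsiE x (MphiFn φ f x) := ENNReal.tsum_le_tsum hbound
      _ = ∫⁻ x in ⋃ n, A n, PsiE x (MphiFn φ f x) :=
          (lintegral_iUnion hAmeas hAdisj _).symm
      _ ≤ ∫⁻ x, PsiE x (MphiFn φ f x) := setLIntegral_le_lintegral _ _
    refine le_trans ?_ h1
    set K := 3 + Real.log M + Real.log 2 with hKdef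
    have hlogM : 0 ≤ Real.log M := Real.log_nonneg hM1
    have hlog2 : 0 < Real.log 2 := Real.log_pos one_lt_two
    have hK0 : 0 < K := by rw [hKdef]; linarith
    have hDle : ∀ n : ℕ, D n ≤ K * (n + 1) := by
      intro n
      rw [hDdef, hKdef]
      simp only
      have hX2 : (2:ℝ) ≤ M * 2 ^ (n + 1) := by
        have h2 : (2:ℝ) ≤ 2 ^ (n + 1) := by
          calc (2:ℝ) = 2 ^ 1 := (pow_one 2).symm
          _ ≤ 2 ^ (n + 1) := by gcongr <;> [exact one_le_two; omega]
        nlinarith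
      have hstep : Real.exp 1 + r (n + 1) ≤ Real.exp 1 * (M * 2 ^ (n + 1)) := by
        rw [hrdef]
        simp only
        nlinarith [two_le_e]
      have hlog : Real.log (Real.exp 1 + r (n + 1))
          ≤ 1 + Real.log M + (n + 1) * Real.log 2 := by
        calc Real.log (Real.exp 1 + r (n + 1))
            ≤ Real.log (Real.exp 1 * (M * 2 ^ (n + 1))) :=
              Real.log_le_log (by positivity) hstep
        _ = 1 + (Real.log M + (n + 1) * Real.log 2) := by
            rw [Real.log_mul (Real.exp_ne_zero 1) (by positivity),
              Real.log_exp, Real.log_mul (ne_of_gt hMpos) (by positivity),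
              Real.log_pow]
            push_cast
            ring
        _ = 1 + Real.log M + (n + 1) * Real.log 2 := by ring
      have hn0 : (0:ℝ) ≤ (n:ℝ) := Nat.cast_nonneg n
      nlinarith
    have hterm : ∀ n : ℕ, ENNReal.ofReal (κ / 2 ^ d) * V * (ENNReal.ofReal (K * ((n:ℝ) + 1)))⁻¹
        ≤ ENNReal.ofReal (κ / r (n + 1) ^ d) / ENNReal.ofReal (D n) * volume (A n) := by
      intro n
      rw [hAvol n]
      have hprod : ENNReal.ofReal (κ / r (n + 1) ^ d) * ENNReal.ofReal (r n ^ d)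
          = ENNReal.ofReal (κ / 2 ^ d) := by
        rw [← ENNReal.ofReal_mul (by positivity)]
        congr 1
        rw [hrsucc n, mul_pow]
        field_simp
        ring
        rw [← mul_pow, mul_inv_cancel₀ (hrpos n).ne', one_pow]
      have hinvle : (ENNReal.ofReal (K * ((n:ℝ) + 1)))⁻¹ ≤ (ENNReal.ofReal (D n))⁻¹ := by
        apply ENNReal.inv_le_inv.mpr
        exact ENNReal.ofReal_le_ofReal (hDle n)
      calc ENNReal.ofReal (κ / 2 ^ d) * V * (ENNReal.ofReal (K * ((n:ℝ) + 1)))⁻¹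
          ≤ ENNReal.ofReal (κ / 2 ^ d) * V * (ENNReal.ofReal (D n))⁻¹ := by gcongr
      _ = ENNReal.ofReal (κ / r (n + 1) ^ d) * ENNReal.ofReal (r n ^ d) * V
            * (ENNReal.ofReal (D n))⁻¹ := by rw [hprod]
      _ = ENNReal.ofReal (κ / r (n + 1) ^ d) / ENNReal.ofReal (D n)
            * (ENNReal.ofReal (r n ^ d) * V) := by
          rw [ENNReal.div_eq_inv_mul]; ac_rfl
    have hne0 : ENNReal.ofReal (κ / 2 ^ d) * V ≠ 0 := by
      apply mul_ne_zero
      · simp only [ne_eq, ENNReal.ofReal_eq_zero, not_le]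
        positivity
      · exact hVpos.ne'
    calc (⊤:ℝ≥0∞) = ENNReal.ofReal (κ / 2 ^ d) * V
          * ∑' n : ℕ, (ENNReal.ofReal (K * ((n:ℝ) + 1)))⁻¹ := by
          rw [tsum_inv_linear_top K hK0, ENNReal.mul_top hne0]
    _ = ∑' n : ℕ, ENNReal.ofReal (κ / 2 ^ d) * V * (ENNReal.ofReal (K * ((n:ℝ) + 1)))⁻¹ :=
          ENNReal.tsum_mul_left.symm
    _ ≤ ∑' n, (ENNReal.ofReal (κ / r (n + 1) ^ d) / ENNReal.ofReal (D n) * volume (A n)) :=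
          ENNReal.tsum_le_tsum hterm
  exact hHlog.ne htot
end

section
/- Let f ∈ L¹(ℝ^d), let U ⊆ ℝ^d be open with f ≥ 0 almost everywhere on U, and suppose ∫_{ℝ^d} Ψ(x, M_φ(f)(x)) dx < ∞. Then for every compact set K ⊂ U one has ∫_K f(x) log⁺ log⁺ f(x) dx < ∞. -/
open MeasureTheory Metric ENNReal Topology Filter

set_option maxHeartbeats 1000000

/-- `log⁺ s = max (log s) 0`. -/
noncomputable def logPlus (s : ℝ) : ℝ := max (Real.log s) 0

section Auxiliary



lemma harmonic_ge (N : ℕ) : Real.log (N+1) ≤ ∑ k ∈ Finset.range N, (1:ℝ)/(k+1) := by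
  induction N with
  | zero => simp
  | succ n ih =>
    rw [Finset.sum_range_succ]
    have h1 : (0:ℝ) < n + 1 := by positivity
    have key : Real.log (n+1+1) - Real.log (n+1) ≤ 1/(n+1) := by
      rw [← Real.log_div (by positivity) (by positivity)]
      have := Real.log_le_sub_one_of_pos (show (0:ℝ) < (n+1+1)/(n+1) by positivity)
      have h2 : (n+1+1:ℝ)/(n+1) - 1 = 1/(n+1) := by field_simp; ring
      linarith
    push_cast
    linarith

lemma one_le_log_add (t : ℝ) (ht : 0 ≤ t) : 1 ≤ Real.log (Real.exp 1 + t) := by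
  have h := Real.log_le_log (Real.exp_pos 1) (show Real.exp 1 ≤ Real.exp 1 + t by linarith)
  rwa [Real.log_exp] at h

lemma log_diff_le {s t : ℝ} (hs : 0 ≤ s) (hst : s ≤ t) :
    Real.log (Real.exp 1 + t) - Real.log (Real.exp 1 + s) ≤ (t - s)/(Real.exp 1 + s) := by
  have he : (0:ℝ) < Real.exp 1 := Real.exp_pos 1
  have h1 : (0:ℝ) < Real.exp 1 + s := by linarith
  have h2 : (0:ℝ) < Real.exp 1 + t := by linarith
  have := Real.log_le_sub_one_of_pos (show (0:ℝ) < (Real.exp 1 + t)/(Real.exp 1 + s) by positivity)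
  rw [Real.log_div h2.ne' h1.ne'] at this
  have h3 : (Real.exp 1 + t)/(Real.exp 1 + s) - 1 = (t-s)/(Real.exp 1 + s) := by field_simp; ring
  linarith

/-- monotonicity of `t ↦ t / (log(e+t)+C)`. -/
lemma hR_mono {C s t : ℝ} (hC : 0 ≤ C) (hs : 0 ≤ s) (hst : s ≤ t) :
    s / (Real.log (Real.exp 1 + s) + C) ≤ t / (Real.log (Real.exp 1 + t) + C) := by
  have he : (0:ℝ) < Real.exp 1 := Real.exp_pos 1
  have hLs : 1 ≤ Real.log (Real.exp 1 + s) := one_le_log_add s hs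
  have hLt : 1 ≤ Real.log (Real.exp 1 + t) := one_le_log_add t (hs.trans hst)
  have hd := log_diff_le hs hst
  have h1 : (0:ℝ) < Real.exp 1 + s := by linarith
  have hfrac : s * ((t-s)/(Real.exp 1 + s)) ≤ s * ((t-s)/s) := by
    rcases eq_or_lt_of_le hs with h | h
    · simp [← h]
    · apply mul_le_mul_of_nonneg_left _ hs
      apply div_le_div_of_nonneg_left (by linarith) h (by linarith)
  rw [div_le_div_iff₀ (by linarith) (by linarith)]
  rcases eq_or_lt_of_le hs with h | h
  · rw [← h] at hLs ⊢; simp only [zero_mul]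
    exact mul_nonneg (by linarith) (by linarith)
  · have h2 : s * ((t-s)/s) = t - s := by field_simp
    nlinarith [mul_le_mul_of_nonneg_left hd (le_of_lt h)]

/-- increment bound: `hR(τ) - hR(τ/2) ≥ τ/(4 (log(e+τ)+C))` for `C ≥ 3`. -/
lemma hR_increment {C τ : ℝ} (hC : 3 ≤ C) (hτ : 0 < τ) :
    τ/(4*(Real.log (Real.exp 1 + τ) + C)) ≤
      τ/(Real.log (Real.exp 1 + τ) + C) - (τ/2)/(Real.log (Real.exp 1 + τ/2) + C) := by
  have he : (0:ℝ) < Real.exp 1 := Real.exp_pos 1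
  set L := Real.log (Real.exp 1 + τ) + C with hL
  set L2 := Real.log (Real.exp 1 + τ/2) + C with hL2
  have h1 : 1 ≤ Real.log (Real.exp 1 + τ) := one_le_log_add _ hτ.le
  have h2 : 1 ≤ Real.log (Real.exp 1 + τ/2) := one_le_log_add _ (by linarith)
  have hLpos : 0 < L := by simp only [hL]; linarith
  have hL2pos : 0 < L2 := by simp only [hL2]; linarith
  have hdd := log_diff_le (show (0:ℝ) ≤ τ/2 by linarith) (show τ/2 ≤ τ by linarith)
  have hq : (τ - τ/2)/(Real.exp 1 + τ/2) ≤ 1 := by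
    rw [div_le_one (by linarith)]; linarith
  have hdiff : L - L2 ≤ 1 := by simp only [hL, hL2]; linarith
  have hL24 : 4 ≤ L2 := by simp only [hL2]; linarith
  rw [div_sub_div _ _ hLpos.ne' hL2pos.ne', div_le_div_iff₀ (by positivity) (by positivity)]
  have key : 2*L ≤ 3*L2 := by linarith
  have k2 : (τ*L)*(2*L) ≤ (τ*L)*(3*L2) :=
    mul_le_mul_of_nonneg_left key (mul_pos hτ hLpos).le
  ring_nf at k2 ⊢
  linarith [k2]

lemma logPlus_nonneg (s : ℝ) : 0 ≤ logPlus s := le_max_right _ _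

lemma logPlus_mono {s t : ℝ} (hs : 0 ≤ s) (hst : s ≤ t) : logPlus s ≤ logPlus t := by
  unfold logPlus
  rcases eq_or_lt_of_le hs with h | h
  · simp [← h, Real.log_zero]
  · exact max_le_max (Real.log_le_log h hst) le_rfl

lemma MphiFn_congr {d : ℕ} (φ : EuclideanSpace ℝ (Fin d) → ℝ)
    {f g : EuclideanSpace ℝ (Fin d) → ℝ} (hfg : f =ᵐ[volume] g)
    (x : EuclideanSpace ℝ (Fin d)) : MphiFn φ f x = MphiFn φ g x := by
  unfold MphiFn
  refine iSup_congr fun ε => iSup_congr fun _ => ?_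
  have : (∫ y, f y * ((ε ^ d)⁻¹ * φ (ε⁻¹ • (x - y)))) =
      ∫ y, g y * ((ε ^ d)⁻¹ * φ (ε⁻¹ • (x - y))) := by
    apply integral_congr_ae
    filter_upwards [hfg] with y hy
    rw [hy]
  rw [this]

lemma exists_phi_ball {d : ℕ} (hd : 1 ≤ d) (φ : EuclideanSpace ℝ (Fin d) → ℝ)
    (hcont : Continuous φ) (hnn : ∀ x, 0 ≤ φ x)
    (hsupp : Function.support φ ⊆ closedBall 0 1) (hint : ∫ x, φ x = 1) :
    ∃ (x₀ : EuclideanSpace ℝ (Fin d)) (η m : ℝ), 0 < η ∧ 0 < m ∧ ‖x₀‖ + η ≤ 1 ∧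
      ∀ z ∈ closedBall x₀ η, m ≤ φ z := by
  -- find a point of positivity
  obtain ⟨x₀, hx₀⟩ : ∃ x₀, 0 < φ x₀ := by
    by_contra h
    push_neg at h
    have : φ = fun _ => 0 := funext fun x => le_antisymm (h x) (hnn x)
    rw [this] at hint
    simp at hint
  obtain ⟨δ, hδ, hδball⟩ := Metric.continuousAt_iff.mp hcont.continuousAt (φ x₀/2) (by linarith)
  set η := δ/2 with hη
  have hηpos : 0 < η := by positivity
  have hlow : ∀ z ∈ closedBall x₀ η, φ x₀ / 2 ≤ φ z := by
    intro z hz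
    have : dist z x₀ < δ := lt_of_le_of_lt (mem_closedBall.mp hz) (by rw [hη]; linarith)
    have := hδball this
    rw [Real.dist_eq] at this
    have := abs_lt.mp this
    linarith [this.1]
  have hsub : closedBall x₀ η ⊆ closedBall (0:EuclideanSpace ℝ (Fin d)) 1 := by
    intro z hz
    exact hsupp (by
      apply Function.mem_support.mpr
      have := hlow z hz
      exact ne_of_gt (by linarith))
  refine ⟨x₀, η, φ x₀/2, hηpos, by positivity, ?_, hlow⟩
  -- show ‖x₀‖ + η ≤ 1 using a witness point
  by_cases hx0 : x₀ = (0:EuclideanSpace ℝ (Fin d))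
  · subst hx0
    haveI : Nonempty (Fin d) := ⟨⟨0, hd⟩⟩
    set u : EuclideanSpace ℝ (Fin d) := EuclideanSpace.single (⟨0, hd⟩ : Fin d) (1:ℝ) with hu
    have hnu : ‖u‖ = 1 := by rw [hu, EuclideanSpace.norm_single]; simp
    have hz : η • u ∈ closedBall (0:EuclideanSpace ℝ (Fin d)) η := by
      rw [mem_closedBall, dist_zero_right, norm_smul, hnu]
      simp [Real.norm_eq_abs, abs_of_nonneg hηpos.le]
    have := hsub hz
    rw [mem_closedBall, dist_zero_right, norm_smul, hnu, mul_one, Real.norm_eq_abs,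
      abs_of_nonneg hηpos.le] at this
    simp only [norm_zero, zero_add]
    linarith [this]
  · have hn : 0 < ‖x₀‖ := norm_pos_iff.mpr hx0
    set z := (1 + η/‖x₀‖) • x₀ with hzdef
    have hz : z ∈ closedBall x₀ η := by
      rw [mem_closedBall, dist_eq_norm]
      have : z - x₀ = (η/‖x₀‖) • x₀ := by rw [hzdef]; module
      rw [this, norm_smul, Real.norm_eq_abs, abs_of_nonneg (by positivity)]
      rw [div_mul_cancel₀ _ hn.ne']
    have := hsub hz
    rw [mem_closedBall, dist_zero_right, hzdef, norm_smul, Real.norm_eq_abs,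
      abs_of_nonneg (by positivity)] at this
    have hexp : (1 + η/‖x₀‖) * ‖x₀‖ = ‖x₀‖ + η := by field_simp
    rw [hexp] at this
    exact this


variable {d : ℕ}

local notation "E" => EuclideanSpace ℝ (Fin d)

/-- lower bound for the convolution integral against a shifted ball. -/
lemma conv_lower (φ : E → ℝ) (x₀ : E) (η m Cb : ℝ)
    (hη : 0 < η) (hm : 0 < m) (hx₀η : ‖x₀‖ + η ≤ 1)
    (hball : ∀ z ∈ closedBall x₀ η, m ≤ φ z)
    (hnnφ : ∀ z, 0 ≤ φ z) (hsupp : Function.support φ ⊆ closedBall 0 1)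
    (hbd : ∀ z, |φ z| ≤ Cb) (hφc : Continuous φ)
    (g : E → ℝ) (hg : Integrable g) (U : Set E)
    (hgU : ∀ᵐ y, y ∈ U → 0 ≤ g y)
    (x : E) (ε : ℝ) (hε : 0 < ε) (hsub : closedBall x ε ⊆ U) :
    ENNReal.ofReal (m * (ε^d)⁻¹) * (∫⁻ y in ball (x - ε • x₀) (ε*η), ENNReal.ofReal (g y)) ≤
      ENNReal.ofReal |∫ y, g y * ((ε ^ d)⁻¹ * φ (ε⁻¹ • (x - y)))| := by
  set B' := ball (x - ε • x₀) (ε*η) with hB'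
  have hB'sub : B' ⊆ closedBall x ε := by
    intro y hy
    rw [hB', mem_ball] at hy
    have h1 : dist y x ≤ dist y (x - ε • x₀) + dist (x - ε • x₀) x := dist_triangle _ _ _
    have h2 : dist (x - ε • x₀) x = ε * ‖x₀‖ := by
      rw [dist_eq_norm]
      have : x - ε • x₀ - x = -(ε • x₀) := by module
      rw [this, norm_neg, norm_smul, Real.norm_eq_abs, abs_of_nonneg hε.le]
    rw [mem_closedBall]
    nlinarith [norm_nonneg x₀]
  -- integrability of the convolution integrand
  have hcontφ : Continuous fun y : E => (ε^d)⁻¹ * φ (ε⁻¹ • (x - y)) := by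
    exact continuous_const.mul (hφc.comp (by fun_prop))
  have h2 : Integrable (fun y => g y * ((ε^d)⁻¹ * φ (ε⁻¹ • (x - y)))) := by
    have := hg.bdd_mul (c := (ε^d)⁻¹ * Cb) hcontφ.aestronglyMeasurable ?bound
    · simpa [mul_comm] using this
    case bound =>
      apply Filter.Eventually.of_forall
      intro y
      rw [Real.norm_eq_abs, abs_mul, abs_of_nonneg (by positivity : (0:ℝ) ≤ (ε^d)⁻¹)]
      exact mul_le_mul_of_nonneg_left (hbd _) (by positivity)
  have h3 : Integrable (B'.indicator (fun y => (m * (ε^d)⁻¹) * g y)) :=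
    (hg.const_mul _).indicator measurableSet_ball
  have key : ∀ᵐ y, B'.indicator (fun y => (m * (ε^d)⁻¹) * g y) y ≤
      g y * ((ε^d)⁻¹ * φ (ε⁻¹ • (x - y))) := by
    filter_upwards [hgU] with y hy
    by_cases hyB : y ∈ B'
    · rw [Set.indicator_of_mem hyB]
      have hyU : 0 ≤ g y := hy (hsub (hB'sub hyB))
      have hz : ε⁻¹ • (x - y) ∈ closedBall x₀ η := by
        rw [mem_closedBall, dist_eq_norm]
        have heq : ε⁻¹ • (x - y) - x₀ = ε⁻¹ • ((x - ε • x₀) - y) := by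
          simp only [smul_sub, smul_smul, inv_mul_cancel₀ hε.ne', one_smul]
          abel
        rw [heq, norm_smul, Real.norm_eq_abs, abs_of_nonneg (by positivity)]
        rw [hB', mem_ball, dist_comm, dist_eq_norm] at hyB
        rw [inv_mul_le_iff₀ hε]
        calc ‖x - ε • x₀ - y‖ ≤ ε * η := le_of_lt hyB
          _ = ε * η := rfl
      have hφm := hball _ hz
      calc m * (ε^d)⁻¹ * g y = g y * ((ε^d)⁻¹ * m) := by ring
        _ ≤ g y * ((ε^d)⁻¹ * φ (ε⁻¹ • (x - y))) := by
            apply mul_le_mul_of_nonneg_left _ hyU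
            exact mul_le_mul_of_nonneg_left hφm (by positivity)
    · rw [Set.indicator_of_notMem hyB]
      by_cases hyC : y ∈ closedBall x ε
      · exact mul_nonneg (hy (hsub hyC)) (mul_nonneg (by positivity) (hnnφ _))
      · have hφ0 : φ (ε⁻¹ • (x - y)) = 0 := by
          by_contra hne
          have : ε⁻¹ • (x - y) ∈ closedBall (0:E) 1 := hsupp (Function.mem_support.mpr hne)
          rw [mem_closedBall, dist_zero_right, norm_smul, Real.norm_eq_abs,
            abs_of_nonneg (by positivity : (0:ℝ) ≤ ε⁻¹), inv_mul_le_iff₀ hε, mul_one] at this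
          exact hyC (by rw [mem_closedBall, dist_eq_norm, ← norm_sub_rev]; exact this)
        rw [hφ0]
        simp
  have h4 := integral_mono_ae h3 h2 key
  rw [integral_indicator measurableSet_ball, integral_const_mul] at h4
  -- relate set integral and lintegral
  have h5 : 0 ≤ᵐ[volume.restrict B'] g := by
    rw [Filter.EventuallyLE]
    refine (ae_restrict_iff' measurableSet_ball).2 ?_
    filter_upwards [hgU] with y hy hyB
    exact hy (hsub (hB'sub hyB))
  have h6 : ENNReal.ofReal (∫ y in B', g y) = ∫⁻ y in B', ENNReal.ofReal (g y) :=
    ofReal_integral_eq_lintegral_ofReal hg.restrict h5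
  have h7 : 0 ≤ ∫ y in B', g y := integral_nonneg_of_ae h5
  calc ENNReal.ofReal (m * (ε^d)⁻¹) * ∫⁻ y in B', ENNReal.ofReal (g y)
      = ENNReal.ofReal (m * (ε^d)⁻¹) * ENNReal.ofReal (∫ y in B', g y) := by rw [h6]
    _ = ENNReal.ofReal (m * (ε^d)⁻¹ * ∫ y in B', g y) := by
        rw [← ENNReal.ofReal_mul (by positivity : (0:ℝ) ≤ m * (ε^d)⁻¹)]
    _ ≤ ENNReal.ofReal (∫ y, g y * ((ε^d)⁻¹ * φ (ε⁻¹ • (x - y)))) := by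
        exact ENNReal.ofReal_le_ofReal h4
    _ ≤ ENNReal.ofReal |∫ y, g y * ((ε^d)⁻¹ * φ (ε⁻¹ • (x - y)))| :=
        ENNReal.ofReal_le_ofReal (le_abs_self _)

lemma revWeakType (hd : 1 ≤ d) (φ : E → ℝ) (x₀ : E) (η m Cb : ℝ)
    (hη : 0 < η) (hm : 0 < m) (hx₀η : ‖x₀‖ + η ≤ 1)
    (hball : ∀ z ∈ closedBall x₀ η, m ≤ φ z)
    (hnnφ : ∀ z, 0 ≤ φ z) (hsupp : Function.support φ ⊆ closedBall 0 1)
    (hbd : ∀ z, |φ z| ≤ Cb) (hφc : Continuous φ)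
    (g : E → ℝ) (hg : Integrable g) (U : Set E)
    (hgU : ∀ᵐ y, y ∈ U → 0 ≤ g y)
    (K : Set E) (hK : IsCompact K) (δ' : ℝ) (hδ' : 0 < δ')
    (hthick : cthickening ((3/η+3)*δ') K ⊆ U)
    (lam0 : ℝ) (hlampos : 0 < lam0)
    (hlam0b : ∀ z : E, (volume.withDensity (fun y => ENNReal.ofReal (g y))) Set.univ ≤
      ENNReal.ofReal (lam0/2) * volume (closedBall z (δ'/5)))
    (lam : ℝ) (hlam : lam0 ≤ lam) :
    ∃ G : Set E, MeasurableSet G ∧ G ⊆ cthickening ((3/η+3)*δ') K ∧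
      (∀ x ∈ G, ENNReal.ofReal (m * (η/3)^d * (volume (ball (0:E) 1)).toReal / 2 * lam)
        ≤ MphiFn φ g x) ∧
      (volume.withDensity (fun y => ENNReal.ofReal (g y))) (K ∩ {y | lam ≤ g y})
        ≤ ENNReal.ofReal (4^d * (4*(3/η+1))^d / 2 * lam) * volume G := by
  classical
  haveI : Nonempty (Fin d) := ⟨⟨0, hd⟩⟩
  set ν := volume.withDensity (fun y => ENNReal.ofReal (g y)) with hν
  set ωb := volume (ball (0:E) 1) with hωb
  have hωb_pos : 0 < ωb := measure_ball_pos _ _ one_pos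
  have hωb_fin : ωb ≠ ⊤ := measure_ball_lt_top.ne
  have hfinrank : Module.finrank ℝ (EuclideanSpace ℝ (Fin d)) = d := by
    simp [finrank_euclideanSpace]
  have hνball : ∀ (y : E) (r : ℝ), ν (closedBall y r) = ∫⁻ z in closedBall y r,
      ENNReal.ofReal (g z) := fun y r => withDensity_apply _ measurableSet_closedBall
  have hlampos' : 0 < lam := lt_of_lt_of_le hlampos hlam
  have hη1 : η ≤ 1 := by nlinarith [norm_nonneg x₀]
  -- theta
  have hθ : 0 < (3/η+3) := by positivity
  -- closed balls around K of radius ≤ δ'/5 are inside U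
  have hsubU : ∀ (y : E), y ∈ K → ∀ r : ℝ, 0 ≤ r → r ≤ δ' → closedBall y r ⊆ U := by
    intro y hy r hr hrδ
    refine subset_trans ?_ hthick
    intro z hz
    apply mem_cthickening_of_dist_le z y _ _ hy
    calc dist z y ≤ r := mem_closedBall.mp hz
      _ ≤ (3/η+3)*δ' := by
          have h30 : (0:ℝ) ≤ 3/η := by positivity
          nlinarith
  -- the "good" set where a suitable radius exists
  set t : Set E := {y | y ∈ K ∧ lam ≤ g y ∧ ∃ r, 0 < r ∧ r ≤ δ'/5 ∧
    ENNReal.ofReal (lam/2) * volume (closedBall y r) ≤ ν (closedBall y r)} with ht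
  -- radius choice with maximality
  have hex : ∀ y ∈ t, ∃ r : ℝ, (0 < r ∧ r ≤ δ'/5 ∧
      ENNReal.ofReal (lam/2) * volume (closedBall y r) ≤ ν (closedBall y r)) ∧
      ν (closedBall y (4*r)) ≤ ENNReal.ofReal (lam/2) * volume (closedBall y (4*r)) := by
    intro y hy
    obtain ⟨hyK, hylam, r₁, hr₁, hr₁δ, hr₁cond⟩ := hy
    set T : Set ℝ := {r | 0 < r ∧ r ≤ δ'/5 ∧
      ENNReal.ofReal (lam/2) * volume (closedBall y r) ≤ ν (closedBall y r)} with hT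
    have hTne : T.Nonempty := ⟨r₁, hr₁, hr₁δ, hr₁cond⟩
    have hTbdd : BddAbove T := ⟨δ'/5, fun r hr => hr.2.1⟩
    set ρ := sSup T with hρ
    have hρpos : 0 < ρ := lt_of_lt_of_le hr₁ (le_csSup hTbdd ⟨hr₁, hr₁δ, hr₁cond⟩)
    obtain ⟨r, hrT, hrhalf⟩ := exists_lt_of_lt_csSup hTne (half_lt_self hρpos)
    refine ⟨r, ⟨hrT.1, hrT.2.1, hrT.2.2⟩, ?_⟩
    by_cases h4r : 4*r ≤ δ'/5
    · -- 4r not in T since 4r > ρ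
      have h4rT : (4*r) ∉ T := by
        intro hmem
        have := le_csSup hTbdd hmem
        have : 4*r ≤ ρ := this
        linarith [hrT.1]
      have : ¬(ENNReal.ofReal (lam/2) * volume (closedBall y (4*r)) ≤ ν (closedBall y (4*r))) := by
        intro hc
        exact h4rT ⟨by linarith [hrT.1], h4r, hc⟩
      exact (not_le.mp this).le
    · -- use the global bound
      calc ν (closedBall y (4*r)) ≤ ν Set.univ := measure_mono (Set.subset_univ _)
        _ ≤ ENNReal.ofReal (lam0/2) * volume (closedBall y (δ'/5)) := hlam0b y
        _ ≤ ENNReal.ofReal (lam/2) * volume (closedBall y (4*r)) := by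
            apply mul_le_mul'
            · exact ENNReal.ofReal_le_ofReal (by linarith)
            · exact measure_mono (closedBall_subset_closedBall (by linarith))
  -- radius function
  obtain ⟨rf, hrfP⟩ : ∃ rf : E → ℝ, ∀ y (h : y ∈ t), (0 < rf y ∧ rf y ≤ δ'/5 ∧
      ENNReal.ofReal (lam/2) * volume (closedBall y (rf y)) ≤ ν (closedBall y (rf y))) ∧
      ν (closedBall y (4*(rf y))) ≤ ENNReal.ofReal (lam/2) * volume (closedBall y (4*(rf y))) := by
    refine ⟨fun y => if h : y ∈ t then (hex y h).choose else 1, fun y h => ?_⟩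
    simp only [dif_pos h]
    exact (hex y h).choose_spec
  -- First Vitali covering
  obtain ⟨u, hut, hudisj, hucov⟩ :=
    Vitali.exists_disjoint_subfamily_covering_enlargement_closedBall t (id : E → E) rf (δ'/5)
      (fun y hy => ((hrfP y hy).1.2.1)) 4 (by norm_num)
  have hucount : u.Countable := by
    apply Set.PairwiseDisjoint.countable_of_nonempty_interior
      (s := fun y => closedBall (y : E) (rf y)) hudisj
    intro y hy
    rw [interior_closedBall _ (((hrfP y (hut hy)).1.1).ne')]
    exact ⟨y, mem_ball_self ((hrfP y (hut hy)).1.1)⟩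
  -- Second Vitali covering on u with dilated radii
  obtain ⟨v, hvu, hvdisj, hvcov⟩ :=
    Vitali.exists_disjoint_subfamily_covering_enlargement_closedBall u (id : E → E)
      (fun y => (3/η+1) * rf y) ((3/η+1) * (δ'/5))
      (fun y hy => by
        have := (hrfP y (hut hy)).1.2.1
        have h1 : (0:ℝ) < 3/η+1 := by positivity
        nlinarith) 4 (by norm_num)
  have hvcount : v.Countable := hucount.mono hvu
  -- the target set G
  set G : Set E := ⋃ b ∈ v, ball (b + (3 * rf b / η) • x₀) (rf b) with hG
  have hGmeas : MeasurableSet G := MeasurableSet.biUnion hvcount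
    (fun b _ => measurableSet_ball)
  -- shifted balls are inside the dilated closed balls
  have hshift : ∀ b ∈ v, ball (b + (3 * rf b / η) • x₀) (rf b) ⊆
      closedBall b ((3/η+1) * rf b) := by
    intro b hbv z hz
    rw [mem_ball] at hz
    have hrb : 0 < rf b := (hrfP b (hut (hvu hbv))).1.1
    have h1 : dist z b ≤ dist z (b + (3 * rf b / η) • x₀) + dist (b + (3 * rf b / η) • x₀) b :=
      dist_triangle _ _ _
    have h2 : dist (b + (3 * rf b / η) • x₀) b ≤ 3 * rf b / η := by
      rw [dist_eq_norm]
      have : b + (3 * rf b / η) • x₀ - b = (3 * rf b / η) • x₀ := by module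
      rw [this, norm_smul, Real.norm_eq_abs, abs_of_nonneg (by positivity)]
      calc 3 * rf b / η * ‖x₀‖ ≤ 3 * rf b / η * 1 := by
            apply mul_le_mul_of_nonneg_left _ (by positivity)
            nlinarith [norm_nonneg x₀, hη]
        _ = 3 * rf b / η := mul_one _
    rw [mem_closedBall]
    have : (3/η+1) * rf b = 3 * rf b / η + rf b := by field_simp
    rw [this]
    linarith
  -- G is inside the thickening
  have hGsub : G ⊆ cthickening ((3/η+3)*δ') K := by
    intro x hx
    rw [hG] at hx
    obtain ⟨b, hbv, hxb⟩ := Set.mem_iUnion₂.mp hx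
    have hbK : b ∈ K := (hut (hvu hbv)).1
    have hdist : dist x b ≤ (3/η+1) * rf b := mem_closedBall.mp (hshift b hbv hxb)
    apply mem_cthickening_of_dist_le x b _ _ hbK
    have hrfb := (hrfP b (hut (hvu hbv))).1.2.1
    have h30 : (0:ℝ) ≤ 3/η := by positivity
    have hrb0 : 0 < rf b := (hrfP b (hut (hvu hbv))).1.1
    calc dist x b ≤ (3/η+1) * rf b := hdist
      _ ≤ (3/η+1) * (δ'/5) := by nlinarith
      _ ≤ (3/η+3)*δ' := by nlinarith
  -- Lebesgue differentiation: a.e. membership in t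
  have hleb := IsUnifLocDoublingMeasure.ae_tendsto_average (μ := (volume : Measure E))
    hg.locallyIntegrable 1
  have key_ae : ∀ᵐ y : E ∂volume, (y ∈ K ∧ lam ≤ g y) → y ∈ t := by
    filter_upwards [hleb] with y hy
    rintro ⟨hyK, hylam⟩
    have hmem : ∀ᶠ r in 𝓝[>] (0:ℝ), y ∈ closedBall y (1 * r) := by
      filter_upwards [self_mem_nhdsWithin] with r hr
      exact mem_closedBall_self (by rw [one_mul]; exact (le_of_lt hr))
    have htend : Filter.Tendsto (fun r : ℝ => ⨍ z in closedBall y r, g z)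
        (𝓝[>] (0:ℝ)) (𝓝 (g y)) := hy (fun _ => y) id tendsto_id hmem
    have hev : ∀ᶠ r in 𝓝[>] (0:ℝ), lam/2 < ⨍ z in closedBall y r, g z :=
      htend.eventually (eventually_gt_nhds (by linarith))
    have hev2 : ∀ᶠ r in 𝓝[>] (0:ℝ), r ∈ Set.Ioc (0:ℝ) (δ'/5) :=
      Ioc_mem_nhdsGT (by positivity)
    obtain ⟨r, h1, h2⟩ := (hev.and hev2).exists
    obtain ⟨hrpos, hrle⟩ := h2
    refine ⟨hyK, hylam, r, hrpos, hrle, ?_⟩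
    have hvolpos : 0 < (volume (closedBall y r)).toReal :=
      ENNReal.toReal_pos (measure_closedBall_pos _ _ hrpos).ne' measure_closedBall_lt_top.ne
    rw [setAverage_eq, smul_eq_mul] at h1
    have hintlb : lam/2 * (volume (closedBall y r)).toReal ≤ ∫ z in closedBall y r, g z := by
      rw [inv_mul_eq_div] at h1
      change lam/2 < (∫ z in closedBall y r, g z) / (volume (closedBall y r)).toReal at h1
      rw [lt_div_iff₀ hvolpos] at h1
      linarith
    have hcb_sub : closedBall y r ⊆ U := hsubU y hyK r hrpos.le (by linarith)
    have hnnr : 0 ≤ᵐ[volume.restrict (closedBall y r)] g := by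
      rw [Filter.EventuallyLE]
      refine (ae_restrict_iff' measurableSet_closedBall).2 ?_
      filter_upwards [hgU] with z hz hzB
      exact hz (hcb_sub hzB)
    calc ENNReal.ofReal (lam/2) * volume (closedBall y r)
        = ENNReal.ofReal (lam/2) * ENNReal.ofReal ((volume (closedBall y r)).toReal) := by
          rw [ENNReal.ofReal_toReal measure_closedBall_lt_top.ne]
      _ = ENNReal.ofReal (lam/2 * (volume (closedBall y r)).toReal) := by
          rw [ENNReal.ofReal_mul (by positivity)]
      _ ≤ ENNReal.ofReal (∫ z in closedBall y r, g z) := ENNReal.ofReal_le_ofReal hintlb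
      _ = ∫⁻ z in closedBall y r, ENNReal.ofReal (g z) :=
          ofReal_integral_eq_lintegral_ofReal hg.restrict hnnr
      _ = ν (closedBall y r) := (hνball y r).symm
  -- sums
  set Su := ∑' b : u, ENNReal.ofReal ((rf b)^d) with hSu
  set Sv := ∑' b : v, ENNReal.ofReal ((rf b)^d) with hSv
  have hrf_nonneg : ∀ y ∈ t, (0:ℝ) ≤ rf y := fun y hy => ((hrfP y hy).1.1).le
  -- volume of closed/open balls
  have hvol_cb : ∀ (y : E) (r : ℝ), 0 ≤ r →
      volume (closedBall y r) = ENNReal.ofReal (r^d) * ωb := by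
    intro y r hr
    rw [hωb, Measure.addHaar_closedBall _ _ hr, hfinrank]
  have hvol_b : ∀ (y : E) (r : ℝ), 0 ≤ r →
      volume (ball y r) = ENNReal.ofReal (r^d) * ωb := by
    intro y r hr
    rw [hωb, Measure.addHaar_ball _ _ hr, hfinrank]
  -- Part A: mass bound
  have hmassA : ν (K ∩ {y | lam ≤ g y}) ≤
      (ENNReal.ofReal (lam/2) * ENNReal.ofReal (4^d) * ωb) * Su := by
    have hsub1 : (K ∩ {y | lam ≤ g y}) ⊆ t ∪ {y | ¬((y ∈ K ∧ lam ≤ g y) → y ∈ t)} := by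
      intro y hy
      by_cases hyt : y ∈ t
      · exact Or.inl hyt
      · exact Or.inr (fun h => hyt (h ⟨hy.1, hy.2⟩))
    have hnull : ν {y | ¬((y ∈ K ∧ lam ≤ g y) → y ∈ t)} = 0 :=
      (withDensity_absolutelyContinuous volume _) (ae_iff.mp key_ae)
    have h1 : ν (K ∩ {y | lam ≤ g y}) ≤ ν t := by
      calc ν (K ∩ {y | lam ≤ g y}) ≤ ν (t ∪ {y | ¬((y ∈ K ∧ lam ≤ g y) → y ∈ t)}) :=
            measure_mono hsub1
        _ ≤ ν t + ν {y | ¬((y ∈ K ∧ lam ≤ g y) → y ∈ t)} := measure_union_le _ _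
        _ = ν t := by rw [hnull, add_zero]
    have h2 : t ⊆ ⋃ b ∈ u, closedBall b (4 * rf b) := by
      intro y hyt
      obtain ⟨b, hbu, hsubb⟩ := hucov y hyt
      exact Set.mem_biUnion hbu (hsubb (mem_closedBall_self (hrf_nonneg y hyt)))
    have h3 : ν t ≤ ∑' b : u, ν (closedBall b (4 * rf b)) :=
      le_trans (measure_mono h2) (measure_biUnion_le ν hucount _)
    have h4 : ∀ b : u, ν (closedBall (b:E) (4 * rf b)) ≤
        (ENNReal.ofReal (lam/2) * ENNReal.ofReal (4^d) * ωb) * ENNReal.ofReal ((rf b)^d) := by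
      intro b
      have hbt : (b:E) ∈ t := hut b.2
      have hrb : 0 < rf b := (hrfP b hbt).1.1
      calc ν (closedBall (b:E) (4 * rf b)) ≤
          ENNReal.ofReal (lam/2) * volume (closedBall (b:E) (4*(rf b))) := (hrfP b hbt).2
        _ = ENNReal.ofReal (lam/2) * (ENNReal.ofReal ((4*rf b)^d) * ωb) := by
            rw [hvol_cb _ _ (by positivity)]
        _ = (ENNReal.ofReal (lam/2) * ENNReal.ofReal (4^d) * ωb) * ENNReal.ofReal ((rf b)^d) := by
            rw [mul_pow, ENNReal.ofReal_mul (by positivity)]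
            ring
    calc ν (K ∩ {y | lam ≤ g y}) ≤ ∑' b : u, ν (closedBall (b:E) (4 * rf b)) :=
          le_trans h1 h3
      _ ≤ ∑' b : u, (ENNReal.ofReal (lam/2) * ENNReal.ofReal (4^d) * ωb) *
            ENNReal.ofReal ((rf b)^d) := ENNReal.tsum_le_tsum h4
      _ = (ENNReal.ofReal (lam/2) * ENNReal.ofReal (4^d) * ωb) * Su := by
          rw [hSu, ENNReal.tsum_mul_left]
  -- Part B : Su ≤ (4*(3/η+1))^d * Sv
  have hc5 : (1:ℝ) ≤ 3/η+1 := by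
    have : (0:ℝ) ≤ 3/η := by positivity
    linarith
  have hpartB : Su ≤ ENNReal.ofReal ((4*(3/η+1))^d) * Sv := by
    have hudisj' : u.PairwiseDisjoint fun a => ball (id a) (rf a) :=
      hudisj.mono (fun y => ball_subset_closedBall)
    have hmb : volume (⋃ b ∈ u, ball b (rf b)) = ∑' b : u, volume (ball (b:E) (rf b)) :=
      measure_biUnion hucount hudisj' (fun b _ => measurableSet_ball)
    have hterm : ∀ b : u, volume (ball (b:E) (rf b)) = ENNReal.ofReal ((rf b)^d) * ωb :=
      fun b => hvol_b _ _ (hrf_nonneg b (hut b.2))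
    have hSuvol : volume (⋃ b ∈ u, ball b (rf b)) = Su * ωb := by
      rw [hmb, hSu]
      rw [← ENNReal.tsum_mul_right]
      exact tsum_congr hterm
    have hsubun : (⋃ b ∈ u, ball b (rf b)) ⊆
        ⋃ b ∈ v, closedBall b (4*((3/η+1) * rf b)) := by
      intro z hz
      obtain ⟨b, hbu, hzb⟩ := Set.mem_iUnion₂.mp hz
      obtain ⟨b', hb'v, hsubb'⟩ := hvcov b hbu
      refine Set.mem_biUnion hb'v (hsubb' ?_)
      have hrb : 0 < rf b := (hrfP b (hut hbu)).1.1
      apply closedBall_subset_closedBall (by nlinarith) (ball_subset_closedBall hzb)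
    have hvb : volume (⋃ b ∈ v, closedBall b (4*((3/η+1) * rf b))) ≤
        ∑' b : v, volume (closedBall (b:E) (4*((3/η+1) * rf b))) :=
      measure_biUnion_le volume hvcount _
    have hterm2 : ∀ b : v, volume (closedBall (b:E) (4*((3/η+1) * rf b))) =
        ENNReal.ofReal ((4*(3/η+1))^d) * ENNReal.ofReal ((rf b)^d) * ωb := by
      intro b
      have hrb : 0 ≤ rf b := hrf_nonneg b (hut (hvu b.2))
      rw [hvol_cb _ _ (by nlinarith)]
      have : (4*((3/η+1) * rf b))^d = (4*(3/η+1))^d * (rf b)^d := by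
        rw [← mul_pow]; ring_nf
      rw [this, ENNReal.ofReal_mul (by positivity)]
    have hchain : Su * ωb ≤ (ENNReal.ofReal ((4*(3/η+1))^d) * Sv) * ωb := by
      calc Su * ωb = volume (⋃ b ∈ u, ball b (rf b)) := hSuvol.symm
        _ ≤ volume (⋃ b ∈ v, closedBall b (4*((3/η+1) * rf b))) := measure_mono hsubun
        _ ≤ ∑' b : v, volume (closedBall (b:E) (4*((3/η+1) * rf b))) := hvb
        _ = ∑' b : v, ENNReal.ofReal ((4*(3/η+1))^d) * ENNReal.ofReal ((rf b)^d) * ωb :=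
            tsum_congr hterm2
        _ = (ENNReal.ofReal ((4*(3/η+1))^d) * Sv) * ωb := by
            rw [hSv, ← ENNReal.tsum_mul_left, ← ENNReal.tsum_mul_right]
    have := (ENNReal.mul_le_mul_iff_left hωb_pos.ne' hωb_fin).mp hchain
    exact this
  -- Part C : volume of G
  have hGdisj : v.PairwiseDisjoint fun b => ball (b + (3 * rf b / η) • x₀) (rf b) := by
    intro a ha b hb hab
    exact (hvdisj ha hb hab).mono (hshift a ha) (hshift b hb)
  have hGvol : volume G = Sv * ωb := by
    rw [hG, measure_biUnion hvcount hGdisj (fun b _ => measurableSet_ball), hSv,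
      ← ENNReal.tsum_mul_right]
    apply tsum_congr
    intro b
    exact hvol_b _ _ (hrf_nonneg b (hut (hvu b.2)))
  -- Part D : pointwise lower bound for the maximal function on G
  have hpartD : ∀ x ∈ G, ENNReal.ofReal (m * (η/3)^d * ωb.toReal / 2 * lam)
      ≤ MphiFn φ g x := by
    intro x hx
    rw [hG] at hx
    obtain ⟨b, hbv, hxb⟩ := Set.mem_iUnion₂.mp hx
    have hbt : b ∈ t := hut (hvu hbv)
    have hrb : 0 < rf b := (hrfP b hbt).1.1
    set ε := 3 * rf b / η with hε
    have hεpos : 0 < ε := by positivity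
    -- closedBall x ε ⊆ U
    have hxU : closedBall x ε ⊆ U := by
      intro z hz
      refine hthick ?_
      apply mem_cthickening_of_dist_le z b _ _ hbt.1
      have h1 : dist z x ≤ ε := mem_closedBall.mp hz
      have h2 : dist x (b + ε • x₀) < rf b := mem_ball.mp hxb
      have h3 : dist (b + ε • x₀) b ≤ ε := by
        rw [dist_eq_norm]
        have : b + ε • x₀ - b = ε • x₀ := by module
        rw [this, norm_smul, Real.norm_eq_abs, abs_of_nonneg hεpos.le]
        nlinarith [norm_nonneg x₀]
      have h4 : dist z b ≤ ε + rf b + ε :=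
        calc dist z b ≤ dist z x + dist x (b + ε • x₀) + dist (b + ε • x₀) b :=
              dist_triangle4 z x (b + ε • x₀) b
          _ ≤ ε + rf b + ε := by linarith [h2.le]
      have hrbδ : rf b ≤ δ'/5 := (hrfP b hbt).1.2.1
      have h30 : (0:ℝ) ≤ 3/η := by positivity
      have hη5 : ε ≤ (3/η) * (δ'/5) := by
        have hε' : ε = (3/η) * rf b := by rw [hε]; ring
        rw [hε']
        exact mul_le_mul_of_nonneg_left hrbδ h30
      calc dist z b ≤ ε + rf b + ε := h4
        _ ≤ (3/η) * (δ'/5) + δ'/5 + (3/η) * (δ'/5) := by linarith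
        _ ≤ (3/η+3) * δ' := by nlinarith
    -- the shifted ball contains closedBall b (rf b)
    have hcont : closedBall b (rf b) ⊆ ball (x - ε • x₀) (ε * η) := by
      intro z hz
      rw [mem_ball]
      have h2 : dist x (b + ε • x₀) < rf b := mem_ball.mp hxb
      have h5 : dist b (x - ε • x₀) < rf b := by
        rw [dist_eq_norm] at h2 ⊢
        have : b - (x - ε • x₀) = -(x - (b + ε • x₀)) := by module
        rw [this, norm_neg]
        exact h2
      have hεη : ε * η = 3 * rf b := by
        rw [hε]; field_simp
      calc dist z (x - ε • x₀) ≤ dist z b + dist b (x - ε • x₀) := dist_triangle _ _ _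
        _ ≤ rf b + dist b (x - ε • x₀) := by linarith [mem_closedBall.mp hz]
        _ < rf b + rf b := by linarith
        _ ≤ ε * η := by rw [hεη]; linarith
    -- apply the convolution bound
    have hconv := conv_lower φ x₀ η m Cb hη hm hx₀η hball hnnφ hsupp hbd hφc
      g hg U hgU x ε hεpos hxU
    have hlint : ν (closedBall b (rf b)) ≤
        ∫⁻ y in ball (x - ε • x₀) (ε*η), ENNReal.ofReal (g y) := by
      rw [hνball]
      exact lintegral_mono_set hcont
    have hmass : ENNReal.ofReal (lam/2) * (ENNReal.ofReal ((rf b)^d) * ωb) ≤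
        ν (closedBall b (rf b)) := by
      rw [← hvol_cb _ _ hrb.le]
      exact (hrfP b hbt).1.2.2
    have hchain : ENNReal.ofReal (m * (η/3)^d * ωb.toReal / 2 * lam) ≤
        ENNReal.ofReal (m * (ε^d)⁻¹) * (∫⁻ y in ball (x - ε • x₀) (ε*η),
          ENNReal.ofReal (g y)) := by
      have hreal : m * (η/3)^d * ωb.toReal / 2 * lam =
          (m * (ε^d)⁻¹) * (lam/2 * ((rf b)^d * ωb.toReal)) := by
        rw [hε]
        rw [div_pow, div_pow]
        field_simp
        ring
      calc ENNReal.ofReal (m * (η/3)^d * ωb.toReal / 2 * lam)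
          = ENNReal.ofReal (m * (ε^d)⁻¹) * ENNReal.ofReal (lam/2) *
            ENNReal.ofReal ((rf b)^d) * ENNReal.ofReal (ωb.toReal) := by
            rw [← ENNReal.ofReal_mul (by positivity), ← ENNReal.ofReal_mul (by positivity),
              ← ENNReal.ofReal_mul (by positivity)]
            congr 1
            rw [hreal]; ring
        _ = ENNReal.ofReal (m * (ε^d)⁻¹) *
              (ENNReal.ofReal (lam/2) * (ENNReal.ofReal ((rf b)^d) * ωb)) := by
            rw [ENNReal.ofReal_toReal hωb_fin]; ring
        _ ≤ ENNReal.ofReal (m * (ε^d)⁻¹) * ν (closedBall b (rf b)) := by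
            exact mul_le_mul_right hmass _
        _ ≤ ENNReal.ofReal (m * (ε^d)⁻¹) * (∫⁻ y in ball (x - ε • x₀) (ε*η),
              ENNReal.ofReal (g y)) := mul_le_mul_right hlint _
    calc ENNReal.ofReal (m * (η/3)^d * ωb.toReal / 2 * lam)
        ≤ ENNReal.ofReal |∫ y, g y * ((ε ^ d)⁻¹ * φ (ε⁻¹ • (x - y)))| :=
          le_trans hchain hconv
      _ ≤ MphiFn φ g x := by
          apply le_iSup_of_le ε
          apply le_iSup_of_le hεpos
          exact le_rfl
  -- final combination
  refine ⟨G, hGmeas, hGsub, hpartD, ?_⟩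
  calc ν (K ∩ {y | lam ≤ g y})
      ≤ (ENNReal.ofReal (lam/2) * ENNReal.ofReal (4^d) * ωb) * Su := hmassA
    _ ≤ (ENNReal.ofReal (lam/2) * ENNReal.ofReal (4^d) * ωb) *
        (ENNReal.ofReal ((4*(3/η+1))^d) * Sv) := mul_le_mul_right hpartB _
    _ = ENNReal.ofReal (4^d * (4*(3/η+1))^d / 2 * lam) * (Sv * ωb) := by
        have h1 : ENNReal.ofReal (4^d * (4*(3/η+1))^d / 2 * lam) =
            ENNReal.ofReal (lam/2) * ENNReal.ofReal (4^d) *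
              ENNReal.ofReal ((4*(3/η+1))^d) := by
          rw [← ENNReal.ofReal_mul (by positivity), ← ENNReal.ofReal_mul (by positivity)]
          congr 1
          ring
        rw [h1]
        ring
    _ = ENNReal.ofReal (4^d * (4*(3/η+1))^d / 2 * lam) * volume G := by rw [hGvol]


end Auxiliary

/-- Partial converse to the Zygmund-type theorem. -/






lemma loglog_pointwise (lam0 : ℝ) (hlam0 : Real.exp (Real.exp 1) ≤ lam0) (s : ℝ) (hs : 0 ≤ s) :
    ENNReal.ofReal (s * logPlus (logPlus s)) ≤
      ENNReal.ofReal ((1 + Real.log (Real.log lam0)) * s) +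
        ∑' k : ℕ, (if lam0 * 2^k ≤ s then ENNReal.ofReal ((k+1:ℝ)⁻¹ * s) else 0) := by
  have hee : (1:ℝ) < Real.exp (Real.exp 1) := by
    have h1 : (0:ℝ) < Real.exp 1 := Real.exp_pos 1
    calc (1:ℝ) = Real.exp 0 := (Real.exp_zero).symm
      _ < Real.exp (Real.exp 1) := Real.exp_lt_exp.mpr h1
  have hlam0pos : (0:ℝ) < lam0 := by linarith
  have hloglam0 : Real.exp 1 ≤ Real.log lam0 := by
    have := Real.log_le_log (by positivity) hlam0
    rwa [Real.log_exp] at this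
  have he1 : (1:ℝ) ≤ Real.exp 1 := by
    have := Real.add_one_le_exp (1:ℝ)
    linarith
  have hloglog0 : (0:ℝ) ≤ Real.log (Real.log lam0) :=
    Real.log_nonneg (by linarith)
  have hlpl0 : logPlus (logPlus lam0) = Real.log (Real.log lam0) := by
    have h1 : logPlus lam0 = Real.log lam0 := max_eq_left (Real.log_nonneg (by linarith))
    rw [h1]
    exact max_eq_left hloglog0
  by_cases hcase : s < lam0
  · have h1 : logPlus (logPlus s) ≤ Real.log (Real.log lam0) := by
      rw [← hlpl0]
      exact logPlus_mono (le_max_right _ _) (logPlus_mono hs hcase.le)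
    have h2 : s * logPlus (logPlus s) ≤ (1 + Real.log (Real.log lam0)) * s := by
      have h3 := mul_le_mul_of_nonneg_left h1 hs
      nlinarith
    exact le_add_right (ENNReal.ofReal_le_ofReal h2)
  · push_neg at hcase
    have hspos : 0 < s := lt_of_lt_of_le hlam0pos hcase
    -- find N with lam0 * 2^N ≤ s < lam0 * 2^(N+1)
    set x := s / lam0 with hx
    have hx1 : (1:ℝ) ≤ x := (one_le_div hlam0pos).mpr hcase
    set N := Nat.floor (Real.logb 2 x) with hN
    have hlogbnn : 0 ≤ Real.logb 2 x := Real.logb_nonneg one_lt_two hx1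
    have hNle : (2:ℝ)^N ≤ x := by
      have h1 : (N:ℝ) ≤ Real.logb 2 x := Nat.floor_le hlogbnn
      have h2 : (2:ℝ)^(N:ℝ) ≤ (2:ℝ)^(Real.logb 2 x) :=
        Real.rpow_le_rpow_of_exponent_le one_le_two h1
      rwa [Real.rpow_natCast, Real.rpow_logb two_pos (by norm_num) (by positivity)] at h2
    have hNgt : x < (2:ℝ)^(N+1) := by
      have h1 : Real.logb 2 x < (N:ℝ)+1 := Nat.lt_floor_add_one _
      have h2 : (2:ℝ)^(Real.logb 2 x) < (2:ℝ)^((N:ℝ)+1) :=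
        Real.rpow_lt_rpow_of_exponent_lt one_lt_two h1
      rw [Real.rpow_logb two_pos (by norm_num) (by positivity)] at h2
      calc x < (2:ℝ)^((N:ℝ)+1) := h2
        _ = (2:ℝ)^(N+1) := by
            rw [← Real.rpow_natCast 2 (N+1)]
            norm_num
    have hsN : lam0 * 2^N ≤ s := by
      rw [hx] at hNle
      rw [le_div_iff₀ hlam0pos] at hNle
      linarith [hNle]
    have hsN1 : s < lam0 * 2^(N+1) := by
      rw [hx] at hNgt
      rw [div_lt_iff₀ hlam0pos] at hNgt
      linarith [hNgt]
    -- identify logPlus (logPlus s)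
    have hlogs : Real.exp 1 ≤ Real.log s := by
      have := Real.log_le_log (by positivity) (le_trans hlam0 hcase)
      rwa [Real.log_exp] at this
    have hlps : logPlus s = Real.log s := max_eq_left (by linarith)
    have hlpls : logPlus (logPlus s) = Real.log (Real.log s) := by
      rw [hlps]
      exact max_eq_left (Real.log_nonneg (by linarith))
    -- main estimate on log log s
    have hlog2 : Real.log 2 ≤ 1 := by
      have := Real.log_le_sub_one_of_pos (two_pos (α := ℝ))
      linarith
    have hlogl0 : 1 ≤ Real.log lam0 := by linarith
    have hls_bound : Real.log s ≤ Real.log lam0 * (N+2) := by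
      have h1 : Real.log s < Real.log (lam0 * 2^(N+1)) :=
        Real.log_lt_log hspos hsN1
      have h2 : Real.log (lam0 * 2^(N+1)) = Real.log lam0 + (N+1) * Real.log 2 := by
        rw [Real.log_mul hlam0pos.ne' (by positivity), Real.log_pow]
        push_cast
        ring
      have h3 : Real.log lam0 + (N+1) * Real.log 2 ≤ Real.log lam0 + (N+1) := by
        have : (0:ℝ) ≤ (N:ℝ)+1 := by positivity
        nlinarith
      have h4 : Real.log lam0 + ((N:ℝ)+1) ≤ Real.log lam0 * (N+2) := by nlinarith
      linarith
    have hlls_bound : Real.log (Real.log s) ≤ Real.log (Real.log lam0) +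
        ∑ k ∈ Finset.range (N+1), (1:ℝ)/(k+1) := by
      have h1 : Real.log (Real.log s) ≤ Real.log (Real.log lam0 * (N+2)) :=
        Real.log_le_log (by linarith) hls_bound
      have h2 : Real.log (Real.log lam0 * (N+2)) = Real.log (Real.log lam0) +
          Real.log (N+2) := by
        rw [Real.log_mul (by linarith) (by positivity)]
      have h3 : Real.log ((N:ℝ)+2) ≤ ∑ k ∈ Finset.range (N+1), (1:ℝ)/(k+1) := by
        have := harmonic_ge (N+1)
        push_cast at this ⊢
        convert this using 2
        ring
      linarith
    -- combine
    have hmain : s * logPlus (logPlus s) ≤ (1 + Real.log (Real.log lam0)) * s +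
        ∑ k ∈ Finset.range (N+1), (k+1:ℝ)⁻¹ * s := by
      rw [hlpls]
      have h1 := mul_le_mul_of_nonneg_left hlls_bound hs
      have h2 : s * (Real.log (Real.log lam0) + ∑ k ∈ Finset.range (N+1), (1:ℝ)/(k+1)) =
          Real.log (Real.log lam0) * s + ∑ k ∈ Finset.range (N+1), (k+1:ℝ)⁻¹ * s := by
        rw [mul_add, Finset.mul_sum, Finset.sum_congr rfl]
        · ring_nf
        · intro k _
          rw [one_div]
          ring
      nlinarith [Finset.sum_nonneg (fun k (_ : k ∈ Finset.range (N+1)) =>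
        mul_nonneg (by positivity : (0:ℝ) ≤ (k+1:ℝ)⁻¹) hs)]
    calc ENNReal.ofReal (s * logPlus (logPlus s))
        ≤ ENNReal.ofReal ((1 + Real.log (Real.log lam0)) * s +
            ∑ k ∈ Finset.range (N+1), (k+1:ℝ)⁻¹ * s) := ENNReal.ofReal_le_ofReal hmain
      _ ≤ ENNReal.ofReal ((1 + Real.log (Real.log lam0)) * s) +
            ENNReal.ofReal (∑ k ∈ Finset.range (N+1), (k+1:ℝ)⁻¹ * s) :=
          ENNReal.ofReal_add_le
      _ ≤ ENNReal.ofReal ((1 + Real.log (Real.log lam0)) * s) +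
            ∑' k : ℕ, (if lam0 * 2^k ≤ s then ENNReal.ofReal ((k+1:ℝ)⁻¹ * s) else 0) := by
          apply add_le_add_right
          rw [ENNReal.ofReal_sum_of_nonneg (fun i _ => by positivity)]
          have hsum : ∀ k ∈ Finset.range (N+1), ENNReal.ofReal ((k+1:ℝ)⁻¹ * s) =
              (if lam0 * 2^k ≤ s then ENNReal.ofReal ((k+1:ℝ)⁻¹ * s) else 0) := by
            intro k hk
            rw [Finset.mem_range] at hk
            have hk' : lam0 * 2^k ≤ s := by
              calc lam0 * 2^k ≤ lam0 * 2^N := by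
                    apply mul_le_mul_of_nonneg_left _ hlam0pos.le
                    apply pow_le_pow_right₀ one_le_two (by omega)
                _ ≤ s := hsN
            rw [if_pos hk']
          rw [Finset.sum_congr rfl hsum]
          exact ENNReal.sum_le_tsum _

/-- Partial converse to the Zygmund-type theorem: an `H^log` function that is nonnegative
a.e. on an open set `U` belongs to `L log log L (K)` for every compact `K ⊂ U`. -/
theorem stmt6 {d : ℕ} (hd : 1 ≤ d)
    (φ : EuclideanSpace ℝ (Fin d) → ℝ) (c : ℝ)
    (hφsmooth : ContDiff ℝ (⊤ : ℕ∞) φ) (hφnonneg : ∀ x, 0 ≤ φ x)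
    (hφsupp : Function.support φ ⊆ closedBall 0 1)
    (hφint : ∫ x, φ x = 1)
    (hφconst : ∀ x : EuclideanSpace ℝ (Fin d), ‖x‖ ≤ 1 / 2 → φ x = c)
    (f : EuclideanSpace ℝ (Fin d) → ℝ) (hf : Integrable f)
    (U : Set (EuclideanSpace ℝ (Fin d))) (hU : IsOpen U)
    (hnonneg : ∀ᵐ x ∂(volume.restrict U), 0 ≤ f x)
    (hHlog : (∫⁻ x, PsiE x (MphiFn φ f x)) < ⊤) :
    ∀ K : Set (EuclideanSpace ℝ (Fin d)), IsCompact K → K ⊆ U →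
      (∫⁻ x in K, ENNReal.ofReal (f x * logPlus (logPlus (f x)))) < ⊤ := by
  intro K hKcomp hKU
  classical
  haveI : Nonempty (Fin d) := ⟨⟨0, hd⟩⟩
  -- measurable representative
  set g : EuclideanSpace ℝ (Fin d) → ℝ := hf.1.mk f with hgdef
  have hfg : f =ᵐ[volume] g := hf.1.ae_eq_mk
  have hgm : Measurable g := hf.1.stronglyMeasurable_mk.measurable
  have hg : Integrable g := hf.congr hfg
  have hgU : ∀ᵐ y, y ∈ U → 0 ≤ g y := by
    have h1 := (ae_restrict_iff' hU.measurableSet).mp hnonneg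
    filter_upwards [h1, hfg] with y h2 h3 hyU
    rw [← h3]; exact h2 hyU
  -- φ facts
  have hφcont : Continuous φ := hφsmooth.continuous
  obtain ⟨x₀, η, m, hη, hm, hx₀η, hballφ⟩ :=
    exists_phi_ball hd φ hφcont hφnonneg hφsupp hφint
  obtain ⟨Cb, hCb⟩ : ∃ Cb, ∀ z, |φ z| ≤ Cb := by
    obtain ⟨Cb, hCb⟩ := (isCompact_closedBall (0:EuclideanSpace ℝ (Fin d)) 1).exists_bound_of_continuousOn
      hφcont.continuousOn
    refine ⟨max Cb 0, fun z => ?_⟩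
    by_cases hz : z ∈ closedBall (0:EuclideanSpace ℝ (Fin d)) 1
    · exact le_trans (by simpa [Real.norm_eq_abs] using hCb z hz) (le_max_left _ _)
    · have : φ z = 0 := by
        by_contra hne
        exact hz (hφsupp (Function.mem_support.mpr hne))
      simp [this]
  -- thickening setup
  obtain ⟨δ₀, hδ₀pos, hδ₀sub⟩ := hKcomp.exists_cthickening_subset_open hU hKU
  set δ' : ℝ := δ₀/(3/η+3) with hδ'def
  have hθpos : 0 < 3/η+3 := by positivity
  have hδ' : 0 < δ' := by positivity
  have hθδ' : (3/η+3) * δ' = δ₀ := by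
    rw [hδ'def]; field_simp
  have hthick : cthickening ((3/η+3)*δ') K ⊆ U := by rw [hθδ']; exact hδ₀sub
  set Kδ := cthickening ((3/η+3)*δ') K with hKδdef
  have hKδcomp : IsCompact Kδ := hKcomp.cthickening
  have hKδmeas : MeasurableSet Kδ := (isClosed_cthickening).measurableSet
  -- norm bound
  obtain ⟨R, hR⟩ : ∃ R, ∀ x ∈ Kδ, ‖x‖ ≤ R := by
    obtain ⟨R, hR⟩ := hKδcomp.isBounded.subset_closedBall 0
    exact ⟨R, fun x hx => by simpa [mem_closedBall, dist_zero_right] using hR hx⟩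
  set CK : ℝ := Real.log (Real.exp 1 + max R 0) + 3 with hCKdef
  have hCK3 : 3 ≤ CK := by
    have := one_le_log_add (max R 0) (le_max_right _ _)
    rw [hCKdef]; linarith
  have hCK0 : 0 ≤ CK := by linarith
  have hCKx : ∀ x ∈ Kδ, Real.log (Real.exp 1 + ‖x‖) ≤ CK := by
    intro x hx
    have h1 : ‖x‖ ≤ max R 0 := le_trans (hR x hx) (le_max_left _ _)
    have h2 : Real.log (Real.exp 1 + ‖x‖) ≤ Real.log (Real.exp 1 + max R 0) :=
      Real.log_le_log (by positivity) (by linarith)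
    rw [hCKdef]; linarith
  -- measure with density
  set ν := volume.withDensity (fun y => ENNReal.ofReal (g y)) with hνdef
  set ωb := volume (ball (0:EuclideanSpace ℝ (Fin d)) 1) with hωbdef
  have hωb_pos : 0 < ωb := measure_ball_pos _ _ one_pos
  have hωb_fin : ωb ≠ ⊤ := measure_ball_lt_top.ne
  have hfinrank : Module.finrank ℝ (EuclideanSpace ℝ (Fin d)) = d := by
    simp [finrank_euclideanSpace]
  have hM1 : ν Set.univ < ⊤ := by
    rw [hνdef, withDensity_apply _ MeasurableSet.univ, Measure.restrict_univ]
    calc ∫⁻ y, ENNReal.ofReal (g y) ≤ ∫⁻ y, (‖g y‖₊ : ℝ≥0∞) :=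
          lintegral_mono (fun y => Real.ofReal_le_enorm _)
      _ < ⊤ := hg.2
  -- lam0
  set W : ℝ := (δ'/5)^d * ωb.toReal with hWdef
  have hωbt_pos : 0 < ωb.toReal := ENNReal.toReal_pos hωb_pos.ne' hωb_fin
  have hWpos : 0 < W := by rw [hWdef]; positivity
  set lam0 : ℝ := max (Real.exp (Real.exp 1)) (2 * ((ν Set.univ).toReal + 1) / W) with hlam0def
  have hlam0e : Real.exp (Real.exp 1) ≤ lam0 := le_max_left _ _
  have hlam0pos : 0 < lam0 := lt_of_lt_of_le (Real.exp_pos _) hlam0e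
  have hlam0b : ∀ z : EuclideanSpace ℝ (Fin d), ν Set.univ ≤
      ENNReal.ofReal (lam0/2) * volume (closedBall z (δ'/5)) := by
    intro z
    have hvol : volume (closedBall z (δ'/5)) = ENNReal.ofReal ((δ'/5)^d) * ωb := by
      rw [hωbdef, Measure.addHaar_closedBall _ _ (by positivity), hfinrank]
    rw [hvol]
    have hchain : ENNReal.ofReal ((ν Set.univ).toReal + 1) ≤
        ENNReal.ofReal (lam0/2) * (ENNReal.ofReal ((δ'/5)^d) * ωb) := by
      have h2 : ENNReal.ofReal (lam0/2) * (ENNReal.ofReal ((δ'/5)^d) * ωb) =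
          ENNReal.ofReal (lam0/2 * W) := by
        rw [hWdef, ← ENNReal.ofReal_toReal hωb_fin, ← ENNReal.ofReal_mul (by positivity),
          ← ENNReal.ofReal_mul (by positivity)]
        congr 1
        rw [ENNReal.toReal_ofReal hωbt_pos.le]
      rw [h2]
      apply ENNReal.ofReal_le_ofReal
      have h3 : 2 * ((ν Set.univ).toReal + 1) / W ≤ lam0 := le_max_right _ _
      rw [div_le_iff₀ hWpos] at h3
      linarith
    calc ν Set.univ = ENNReal.ofReal ((ν Set.univ).toReal) := (ENNReal.ofReal_toReal hM1.ne).symm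
      _ ≤ ENNReal.ofReal ((ν Set.univ).toReal + 1) := ENNReal.ofReal_le_ofReal (by linarith)
      _ ≤ _ := hchain
  -- constants
  set c₂ : ℝ := m * (η/3)^d * ωb.toReal / 2 with hc₂def
  have hc₂pos : 0 < c₂ := by rw [hc₂def]; positivity
  set C₇ : ℝ := 4^d * (4*(3/η+1))^d / 2 with hC₇def
  have hC₇pos : 0 < C₇ := by rw [hC₇def]; positivity
  -- sequences
  set lam : ℕ → ℝ := fun k => lam0 * 2^k with hlamdef
  have hlamk : ∀ k, lam0 ≤ lam k := by
    intro k
    rw [hlamdef]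
    calc lam0 = lam0 * 1 := (mul_one _).symm
      _ ≤ lam0 * 2^k := by
          apply mul_le_mul_of_nonneg_left _ hlam0pos.le
          exact one_le_pow₀ one_le_two
  have hlamkpos : ∀ k, 0 < lam k := fun k => lt_of_lt_of_le hlam0pos (hlamk k)
  -- apply revWeakType
  have hrev := fun k => revWeakType hd φ x₀ η m Cb hη hm hx₀η hballφ hφnonneg hφsupp hCb
    hφcont g hg U hgU K hKcomp δ' hδ' hthick lam0 hlam0pos hlam0b (lam k) (hlamk k)
  choose Gs hGsmeas hGssub hGslow hGsmass using hrev
  -- tau and dk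
  set tau : ℕ → ℝ := fun k => c₂ * lam k with htaudef
  have htaupos : ∀ k, 0 < tau k := fun k => mul_pos hc₂pos (hlamkpos k)
  have htau_half : ∀ k, tau (k+1) / 2 = tau k := by
    intro k
    rw [htaudef, hlamdef]
    simp only
    rw [pow_succ]
    ring
  set dk : ℕ → ℝ := fun k => tau k / (Real.log (Real.exp 1 + tau k) + CK) -
    (tau k / 2) / (Real.log (Real.exp 1 + tau k / 2) + CK) with hdkdef
  have hdk_nonneg : ∀ k, 0 ≤ dk k := by
    intro k
    rw [hdkdef]
    simp only [sub_nonneg]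
    exact hR_mono hCK0 (by linarith [htaupos k]) (by linarith [htaupos k])
  -- telescoping
  have htel : ∀ N, ∑ k ∈ Finset.range (N+1), dk k =
      tau N / (Real.log (Real.exp 1 + tau N) + CK) -
      (tau 0 / 2) / (Real.log (Real.exp 1 + tau 0 / 2) + CK) := by
    intro N
    induction N with
    | zero => simp [hdkdef]
    | succ n ih =>
      rw [Finset.sum_range_succ, ih, hdkdef]
      simp only
      rw [htau_half n]
      ring
  -- maximal functions agree
  have hMgf : ∀ x, MphiFn φ f x = MphiFn φ g x := fun x => MphiFn_congr φ hfg x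
  -- T
  set T := ∫⁻ x in Kδ, (MphiFn φ g x) /
    ENNReal.ofReal (Real.log (Real.exp 1 + (MphiFn φ g x).toReal) + CK) with hTdef
  have hT_fin : T < ⊤ := by
    have h1 : T ≤ ∫⁻ x in Kδ, PsiE x (MphiFn φ g x) := by
      apply lintegral_mono_ae
      refine (ae_restrict_iff' hKδmeas).2 (Filter.Eventually.of_forall ?_)
      intro x hx
      unfold PsiE
      exact ENNReal.div_le_div_left
        (ENNReal.ofReal_le_ofReal (by linarith [hCKx x hx])) _
    have h2 : (∫⁻ x in Kδ, PsiE x (MphiFn φ g x)) ≤ ∫⁻ x, PsiE x (MphiFn φ f x) := by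
      calc (∫⁻ x in Kδ, PsiE x (MphiFn φ g x))
          = ∫⁻ x in Kδ, PsiE x (MphiFn φ f x) :=
            lintegral_congr (fun x => by rw [hMgf x])
        _ ≤ _ := setLIntegral_le_lintegral _ _
    exact lt_of_le_of_lt (le_trans h1 h2) hHlog
  -- master inequality
  have hmaster : (∑' k : ℕ, ENNReal.ofReal (dk k) * volume (Gs k)) ≤ T := by
    have hpt : ∀ x ∈ Kδ, (∑' k, (Gs k).indicator (fun _ => ENNReal.ofReal (dk k)) x) ≤
        (MphiFn φ g x) /
          ENNReal.ofReal (Real.log (Real.exp 1 + (MphiFn φ g x).toReal) + CK) := by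
      intro x hx
      rw [ENNReal.tsum_eq_iSup_sum]
      apply iSup_le
      intro s
      by_cases hs' : (s.filter (fun k => x ∈ Gs k)).Nonempty
      · set N := (s.filter (fun k => x ∈ Gs k)).max' hs' with hNdef
        have hxN : x ∈ Gs N :=
          (Finset.mem_filter.mp ((s.filter (fun k => x ∈ Gs k)).max'_mem hs')).2
        have hstep1 : ∑ k ∈ s, (Gs k).indicator (fun _ => ENNReal.ofReal (dk k)) x =
            ∑ k ∈ s.filter (fun k => x ∈ Gs k), ENNReal.ofReal (dk k) := by
          rw [Finset.sum_filter]
          apply Finset.sum_congr rfl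
          intro k _
          by_cases hk : x ∈ Gs k
          · rw [Set.indicator_of_mem hk, if_pos hk]
          · rw [Set.indicator_of_notMem hk, if_neg hk]
        have hstep2 : ∑ k ∈ s.filter (fun k => x ∈ Gs k), ENNReal.ofReal (dk k) ≤
            ∑ k ∈ Finset.range (N+1), ENNReal.ofReal (dk k) := by
          apply Finset.sum_le_sum_of_subset
          intro k hk
          rw [Finset.mem_range]
          have := Finset.le_max' _ k hk
          omega
        have hstep3 : ∑ k ∈ Finset.range (N+1), ENNReal.ofReal (dk k) =
            ENNReal.ofReal (∑ k ∈ Finset.range (N+1), dk k) :=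
          (ENNReal.ofReal_sum_of_nonneg (fun i _ => hdk_nonneg i)).symm
        have hstep4 : (∑ k ∈ Finset.range (N+1), dk k) ≤
            tau N / (Real.log (Real.exp 1 + tau N) + CK) := by
          rw [htel N]
          have h0 : 0 ≤ (tau 0 / 2) / (Real.log (Real.exp 1 + tau 0 / 2) + CK) := by
            apply div_nonneg (by linarith [htaupos 0])
            have := one_le_log_add (tau 0/2) (by linarith [htaupos 0])
            linarith
          linarith
        have hstep5 : ENNReal.ofReal (tau N / (Real.log (Real.exp 1 + tau N) + CK)) ≤
            (MphiFn φ g x) /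
              ENNReal.ofReal (Real.log (Real.exp 1 + (MphiFn φ g x).toReal) + CK) := by
          have hlow := hGslow N x hxN
          have hexpr : m * (η/3)^d *
              (volume (ball (0:EuclideanSpace ℝ (Fin d)) 1)).toReal / 2 * lam N = tau N := by
            rw [htaudef, hc₂def, ← hωbdef]
          rw [hexpr] at hlow
          by_cases hMg : MphiFn φ g x = ⊤
          · rw [hMg, ENNReal.top_div_of_ne_top ENNReal.ofReal_ne_top]
            exact le_top
          · have hb0 : 0 ≤ (MphiFn φ g x).toReal := ENNReal.toReal_nonneg
            have hbN : tau N ≤ (MphiFn φ g x).toReal :=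
              (ENNReal.ofReal_le_iff_le_toReal hMg).mp hlow
            have hdenom : 0 < Real.log (Real.exp 1 + (MphiFn φ g x).toReal) + CK := by
              have := one_le_log_add _ hb0; linarith
            calc ENNReal.ofReal (tau N / (Real.log (Real.exp 1 + tau N) + CK))
                ≤ ENNReal.ofReal ((MphiFn φ g x).toReal /
                    (Real.log (Real.exp 1 + (MphiFn φ g x).toReal) + CK)) :=
                  ENNReal.ofReal_le_ofReal (hR_mono hCK0 (htaupos N).le hbN)
              _ = ENNReal.ofReal ((MphiFn φ g x).toReal) /
                    ENNReal.ofReal (Real.log (Real.exp 1 + (MphiFn φ g x).toReal) + CK) :=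
                  ENNReal.ofReal_div_of_pos hdenom
              _ = _ := by rw [ENNReal.ofReal_toReal hMg]
        calc ∑ k ∈ s, (Gs k).indicator (fun _ => ENNReal.ofReal (dk k)) x
            = ∑ k ∈ s.filter (fun k => x ∈ Gs k), ENNReal.ofReal (dk k) := hstep1
          _ ≤ ∑ k ∈ Finset.range (N+1), ENNReal.ofReal (dk k) := hstep2
          _ = ENNReal.ofReal (∑ k ∈ Finset.range (N+1), dk k) := hstep3
          _ ≤ ENNReal.ofReal (tau N / (Real.log (Real.exp 1 + tau N) + CK)) :=
              ENNReal.ofReal_le_ofReal hstep4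
          _ ≤ _ := hstep5
      · have hzero : ∑ k ∈ s, (Gs k).indicator (fun _ => ENNReal.ofReal (dk k)) x = 0 := by
          apply Finset.sum_eq_zero
          intro k hk
          have hxk : x ∉ Gs k := by
            intro hmem
            exact hs' ⟨k, Finset.mem_filter.mpr ⟨hk, hmem⟩⟩
          rw [Set.indicator_of_notMem hxk]
        rw [hzero]
        exact zero_le
    have heq : (∑' k : ℕ, ENNReal.ofReal (dk k) * volume (Gs k)) =
        ∫⁻ x in Kδ, (∑' k, (Gs k).indicator (fun _ => ENNReal.ofReal (dk k)) x) := by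
      rw [lintegral_tsum (fun k => (measurable_const.indicator (hGsmeas k)).aemeasurable)]
      apply tsum_congr
      intro k
      rw [lintegral_indicator (hGsmeas k), setLIntegral_const,
        Measure.restrict_apply (hGsmeas k), Set.inter_eq_self_of_subset_left (hGssub k)]
    rw [heq, hTdef]
    exact lintegral_mono_ae ((ae_restrict_iff' hKδmeas).2 (Filter.Eventually.of_forall hpt))
  -- the level-set masses
  set a : ℕ → ℝ≥0∞ := fun k => ν (K ∩ {y | lam k ≤ g y}) with hadef
  have hak : ∀ k, a k ≤ ENNReal.ofReal (C₇ * lam k) * volume (Gs k) := by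
    intro k
    have h1 := hGsmass k
    have hexpr : (4:ℝ)^d * (4*(3/η+1))^d / 2 * lam k = C₇ * lam k := by rw [hC₇def]
    rw [hexpr] at h1
    exact h1
  set C14 : ℝ := Real.log (Real.exp 1 + tau 0) + CK with hC14def
  have hC14_1 : 1 ≤ C14 := by
    have := one_le_log_add (tau 0) (htaupos 0).le
    rw [hC14def]; linarith
  have hLLk : ∀ k : ℕ, Real.log (Real.exp 1 + tau k) + CK ≤ C14 * (k+1) := by
    intro k
    have h2k : (1:ℝ) ≤ 2^k := one_le_pow₀ one_le_two
    have htk : tau k = tau 0 * 2^k := by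
      rw [htaudef, hlamdef]
      simp only [pow_zero, mul_one]
      ring
    have he1 : (0:ℝ) < Real.exp 1 := Real.exp_pos 1
    have h1 : Real.exp 1 + tau k ≤ (Real.exp 1 + tau 0) * 2^k := by
      rw [htk]
      nlinarith [htaupos 0]
    have h2 : Real.log (Real.exp 1 + tau k) ≤
        Real.log (Real.exp 1 + tau 0) + k * Real.log 2 := by
      calc Real.log (Real.exp 1 + tau k) ≤ Real.log ((Real.exp 1 + tau 0) * 2^k) :=
            Real.log_le_log (by positivity) h1
        _ = Real.log (Real.exp 1 + tau 0) + k * Real.log 2 := by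
            rw [Real.log_mul (by positivity) (by positivity), Real.log_pow]
    have hlog2 : Real.log 2 ≤ 1 := by
      have := Real.log_le_sub_one_of_pos (two_pos (α := ℝ))
      linarith
    have hkn : (0:ℝ) ≤ (k:ℝ) := Nat.cast_nonneg k
    have h3 : Real.log (Real.exp 1 + tau k) + CK ≤ C14 + k := by
      rw [hC14def]
      nlinarith
    calc Real.log (Real.exp 1 + tau k) + CK ≤ C14 + k := h3
      _ ≤ C14 * (k+1) := by nlinarith
  have hdk_low : ∀ k, tau k / (4 * (C14 * (k+1))) ≤ dk k := by
    intro k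
    have h1 := hR_increment hCK3 (htaupos k)
    have hlogpos : 0 < Real.log (Real.exp 1 + tau k) + CK := by
      have := one_le_log_add (tau k) (htaupos k).le
      linarith
    have h2 : tau k / (4 * (C14 * (k+1))) ≤
        tau k/(4*(Real.log (Real.exp 1 + tau k) + CK)) := by
      apply div_le_div_of_nonneg_left (htaupos k).le (by positivity)
      have := hLLk k
      linarith
    rw [hdkdef]
    exact le_trans h2 h1
  have hC₈nn : (0:ℝ) ≤ 4 * C14 * C₇ / c₂ :=
    div_nonneg (by nlinarith) hc₂pos.le
  set C₈ : ℝ := 4 * C14 * C₇ / c₂ with hC₈def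
  have hsum_a : (∑' k : ℕ, ENNReal.ofReal ((k+1:ℝ)⁻¹) * a k) ≤ ENNReal.ofReal C₈ * T := by
    have hterm : ∀ k : ℕ, ENNReal.ofReal ((k+1:ℝ)⁻¹) * a k ≤
        ENNReal.ofReal C₈ * (ENNReal.ofReal (dk k) * volume (Gs k)) := by
      intro k
      have hkpos : (0:ℝ) < (k:ℝ)+1 := by positivity
      calc ENNReal.ofReal ((k+1:ℝ)⁻¹) * a k
          ≤ ENNReal.ofReal ((k+1:ℝ)⁻¹) * (ENNReal.ofReal (C₇ * lam k) * volume (Gs k)) :=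
            mul_le_mul_right (hak k) _
        _ = ENNReal.ofReal ((k+1:ℝ)⁻¹ * (C₇ * lam k)) * volume (Gs k) := by
            rw [← mul_assoc, ← ENNReal.ofReal_mul (by positivity)]
        _ ≤ ENNReal.ofReal (C₈ * dk k) * volume (Gs k) := by
            apply mul_le_mul_left
            apply ENNReal.ofReal_le_ofReal
            have h1 := hdk_low k
            have h2 : (k+1:ℝ)⁻¹ * (C₇ * lam k) = C₈ * (tau k / (4*(C14*(k+1)))) := by
              rw [hC₈def, htaudef]
              field_simp
            rw [h2]
            apply mul_le_mul_of_nonneg_left h1 hC₈nn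
        _ = ENNReal.ofReal C₈ * (ENNReal.ofReal (dk k) * volume (Gs k)) := by
            rw [ENNReal.ofReal_mul hC₈nn]
            ring
    calc (∑' k : ℕ, ENNReal.ofReal ((k+1:ℝ)⁻¹) * a k) ≤
        ∑' k : ℕ, ENNReal.ofReal C₈ * (ENNReal.ofReal (dk k) * volume (Gs k)) :=
          ENNReal.tsum_le_tsum hterm
      _ = ENNReal.ofReal C₈ * ∑' k : ℕ, (ENNReal.ofReal (dk k) * volume (Gs k)) :=
          ENNReal.tsum_mul_left
      _ ≤ ENNReal.ofReal C₈ * T := mul_le_mul_right hmaster _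
  have hsum_fin : (∑' k : ℕ, ENNReal.ofReal ((k+1:ℝ)⁻¹) * a k) < ⊤ :=
    lt_of_le_of_lt hsum_a (ENNReal.mul_lt_top ENNReal.ofReal_lt_top hT_fin)
  -- final integral
  have hKmeas : MeasurableSet K := hKcomp.isClosed.measurableSet
  have hgK : ∀ᵐ y ∂(volume.restrict K), 0 ≤ g y := by
    refine (ae_restrict_iff' hKmeas).2 ?_
    filter_upwards [hgU] with y h hyK
    exact h (hKU hyK)
  have hcongrK : (∫⁻ y in K, ENNReal.ofReal (f y * logPlus (logPlus (f y)))) =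
      ∫⁻ y in K, ENNReal.ofReal (g y * logPlus (logPlus (g y))) := by
    apply lintegral_congr_ae
    filter_upwards [ae_restrict_of_ae hfg] with y hy
    rw [hy]
  rw [hcongrK]
  have hptwise : ∀ᵐ y ∂(volume.restrict K),
      ENNReal.ofReal (g y * logPlus (logPlus (g y))) ≤
      ENNReal.ofReal ((1 + Real.log (Real.log lam0)) * g y) +
        ∑' k : ℕ, (if lam0 * 2^k ≤ g y then ENNReal.ofReal ((k+1:ℝ)⁻¹ * g y) else 0) := by
    filter_upwards [hgK] with y hy
    exact loglog_pointwise lam0 hlam0e (g y) hy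
  have hL0 : 0 ≤ 1 + Real.log (Real.log lam0) := by
    have h1 : Real.exp 1 ≤ Real.log lam0 := by
      have := Real.log_le_log (Real.exp_pos _) hlam0e
      rwa [Real.log_exp] at this
    have h2 : (0:ℝ) ≤ Real.log (Real.log lam0) := by
      apply Real.log_nonneg
      have := Real.add_one_le_exp (1:ℝ)
      linarith
    linarith
  have hint1 : (∫⁻ y in K, ENNReal.ofReal ((1 + Real.log (Real.log lam0)) * g y)) < ⊤ := by
    calc ∫⁻ y in K, ENNReal.ofReal ((1 + Real.log (Real.log lam0)) * g y)
        = ∫⁻ y in K, ENNReal.ofReal (1 + Real.log (Real.log lam0)) * ENNReal.ofReal (g y) :=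
          lintegral_congr (fun y => by rw [ENNReal.ofReal_mul hL0])
      _ = ENNReal.ofReal (1 + Real.log (Real.log lam0)) * ∫⁻ y in K, ENNReal.ofReal (g y) :=
          lintegral_const_mul _ (ENNReal.measurable_ofReal.comp hgm)
      _ ≤ ENNReal.ofReal (1 + Real.log (Real.log lam0)) * ν Set.univ := by
          apply mul_le_mul_right
          rw [hνdef, withDensity_apply _ MeasurableSet.univ, Measure.restrict_univ]
          exact setLIntegral_le_lintegral _ _
      _ < ⊤ := ENNReal.mul_lt_top ENNReal.ofReal_lt_top hM1
  have hint2 : (∫⁻ y in K, ∑' k : ℕ,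
      (if lam0 * 2^k ≤ g y then ENNReal.ofReal ((k+1:ℝ)⁻¹ * g y) else 0)) ≤
      ∑' k : ℕ, ENNReal.ofReal ((k+1:ℝ)⁻¹) * a k := by
    have hmeas : ∀ k : ℕ, Measurable (fun y =>
        (if lam0 * 2^k ≤ g y then ENNReal.ofReal ((k+1:ℝ)⁻¹ * g y) else 0)) := by
      intro k
      exact Measurable.ite (measurableSet_le measurable_const hgm)
        ((ENNReal.measurable_ofReal).comp (hgm.const_mul _)) measurable_const
    rw [lintegral_tsum (fun k => (hmeas k).aemeasurable)]
    apply ENNReal.tsum_le_tsum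
    intro k
    apply le_of_eq
    have hSmeas : MeasurableSet {y : EuclideanSpace ℝ (Fin d) | lam k ≤ g y} :=
      measurableSet_le measurable_const hgm
    have heqind : ∀ y, (if lam0 * 2^k ≤ g y then ENNReal.ofReal ((k+1:ℝ)⁻¹ * g y) else 0) =
        ({y | lam k ≤ g y}).indicator (fun y => ENNReal.ofReal ((k+1:ℝ)⁻¹ * g y)) y := by
      intro y
      have hlamk' : lam k = lam0 * 2^k := by rw [hlamdef]
      rw [Set.indicator_apply]
      simp only [Set.mem_setOf_eq, hlamk']
    calc (∫⁻ y in K, if lam0 * 2^k ≤ g y then ENNReal.ofReal ((k+1:ℝ)⁻¹ * g y) else 0)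
        = ∫⁻ y in K, ({y | lam k ≤ g y}).indicator
            (fun y => ENNReal.ofReal ((k+1:ℝ)⁻¹ * g y)) y :=
          lintegral_congr heqind
      _ = ∫⁻ y in {y | lam k ≤ g y} ∩ K, ENNReal.ofReal ((k+1:ℝ)⁻¹ * g y) := by
          rw [lintegral_indicator hSmeas, Measure.restrict_restrict hSmeas]
      _ = ∫⁻ y in {y | lam k ≤ g y} ∩ K,
            ENNReal.ofReal ((k+1:ℝ)⁻¹) * ENNReal.ofReal (g y) :=
          lintegral_congr (fun y => by rw [← ENNReal.ofReal_mul (by positivity)])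
      _ = ENNReal.ofReal ((k+1:ℝ)⁻¹) * ∫⁻ y in {y | lam k ≤ g y} ∩ K,
            ENNReal.ofReal (g y) :=
          lintegral_const_mul _ (ENNReal.measurable_ofReal.comp hgm)
      _ = ENNReal.ofReal ((k+1:ℝ)⁻¹) * ν ({y | lam k ≤ g y} ∩ K) := by
          rw [hνdef, withDensity_apply _ (hSmeas.inter hKmeas)]
      _ = ENNReal.ofReal ((k+1:ℝ)⁻¹) * a k := by
          rw [hadef]
          simp only
          rw [Set.inter_comm]
  calc (∫⁻ y in K, ENNReal.ofReal (g y * logPlus (logPlus (g y))))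
      ≤ ∫⁻ y in K, (ENNReal.ofReal ((1 + Real.log (Real.log lam0)) * g y) +
          ∑' k : ℕ, (if lam0 * 2^k ≤ g y then ENNReal.ofReal ((k+1:ℝ)⁻¹ * g y) else 0)) :=
        lintegral_mono_ae hptwise
    _ = (∫⁻ y in K, ENNReal.ofReal ((1 + Real.log (Real.log lam0)) * g y)) +
        ∫⁻ y in K, ∑' k : ℕ,
          (if lam0 * 2^k ≤ g y then ENNReal.ofReal ((k+1:ℝ)⁻¹ * g y) else 0) := by
        apply lintegral_add_left
        exact (ENNReal.measurable_ofReal).comp (hgm.const_mul _)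
    _ < ⊤ := ENNReal.add_lt_top.mpr ⟨hint1, lt_of_le_of_lt hint2 hsum_fin⟩
end

section
/- Let I ∈ 𝓘 be a dyadic arc and let β ∈ L^∞(𝕋) be supported in I. Then ∫_I Ψ₀(S_𝓘[β](θ)) dθ ≤ (1 + (2π)^{1/2}) |I| Ψ₀(‖β‖_{L^∞(𝕋)}). -/
/-!
Write `M = ‖β‖_∞` and `L = log (e + M)`, so that `Ψ₀(M) = M / L`. Pointwise
`Ψ₀(s) ≤ Ψ₀(M) + s / L`, hence `∫_I Ψ₀(S[β]) ≤ |I| Ψ₀(M) + L⁻¹ ∫_I S[β]`, and it suffices to show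
`∫_I S[β] ≤ M |I|` (which gives the constant `2 ≤ 1 + √(2π)`). By Cauchy–Schwarz
`(∫_I S[β])² ≤ |I| ∫_𝕋 S[β]² = |I| ∑_J |⟨β, h_J⟩|²`, and Bessel's inequality for the Haar system
bounds the sum by `‖β‖₂² ≤ M² |I|`. Bessel's inequality is proved by telescoping:
`|⟨β, h_J⟩|²` is the increase of `∑ (∫_J β)² / |J|` when `J` is replaced by its two halves.
-/

open MeasureTheory Real Set ENNReal

noncomputable section

/-- `Ψ₀(t) = t / log(e+t)`. -/
def psi0 (t : ℝ) : ℝ := t / Real.log (Real.exp 1 + t)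

/-- `Ψ₀` on `[0,∞]`, with `Ψ₀(∞) = ∞`. -/
def psi0E (t : ℝ≥0∞) : ℝ≥0∞ := t / ENNReal.ofReal (Real.log (Real.exp 1 + t.toReal))

/-- The length `2π·2^{-k}` of a dyadic arc of generation `k`. -/
def arcLen (k : ℕ) : ℝ := 2 * π / 2 ^ k

/-- The left endpoint `2π(2^{-k} m + δ)` of the dyadic arc `I^δ(k,m)`. -/
def arcStart (δ : ℝ) (k m : ℕ) : ℝ := 2 * π * ((m : ℝ) / 2 ^ k + δ)

/-- The dyadic arc `I^δ(k,m) = [2π(2^{-k}m + δ), 2π(2^{-k}(m+1) + δ))`. -/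
def arc (δ : ℝ) (k m : ℕ) : Set ℝ := Ico (arcStart δ k m) (arcStart δ k m + arcLen k)

/-- The Haar function `h_I = |I|^{-1/2}(χ_{I_-} - χ_{I_+})` of the arc `I^δ(k,m)`. -/
def haar (δ : ℝ) (k m : ℕ) : ℝ → ℝ := fun θ =>
  (arcLen k) ^ (-(1 : ℝ) / 2) *
    ((Ico (arcStart δ k m) (arcStart δ k m + arcLen k / 2)).indicator (fun _ => (1 : ℝ)) θ -
      (Ico (arcStart δ k m + arcLen k / 2) (arcStart δ k m + arcLen k)).indicator
        (fun _ => (1 : ℝ)) θ)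

/-- The fundamental domain `[2πδ, 2πδ + 2π)` of the torus, containing all arcs of `𝓘^δ`. -/
def torus (δ : ℝ) : Set ℝ := Ico (2 * π * δ) (2 * π * δ + 2 * π)

/-- The Haar coefficient `⟨f, h_I⟩ = ∫_𝕋 f h_I dθ`. -/
def haarCoeff (δ : ℝ) (k m : ℕ) (f : ℝ → ℝ) : ℝ := ∫ θ in torus δ, f θ * haar δ k m θ

/-- The dyadic square function `S_𝓘[f] = (Σ_{I∈𝓘} |⟨f,h_I⟩|² χ_I/|I|)^{1/2}` (valued in `[0,∞]`). -/
def sqFn (δ : ℝ) (f : ℝ → ℝ) (θ : ℝ) : ℝ≥0∞ :=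
  (∑' (k : ℕ) (m : Fin (2 ^ k)),
      (‖haarCoeff δ k m f‖₊ : ℝ≥0∞) ^ 2 *
        (arc δ k m).indicator (fun _ => (ENNReal.ofReal (arcLen k))⁻¹) θ) ^ (1 / 2 : ℝ)

/-- The `L^∞` norm (essential supremum of `|f|`), valued in `[0,∞]`. -/
def einfNorm (f : ℝ → ℝ) : ℝ≥0∞ := essSup (fun θ => (‖f θ‖₊ : ℝ≥0∞)) volume

open Function

lemma one_le_log_exp_one_add {t : ℝ} (ht : 0 ≤ t) : 1 ≤ Real.log (Real.exp 1 + t) := by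
  calc 1 = Real.log (Real.exp 1) := (Real.log_exp 1).symm
    _ ≤ _ := Real.log_le_log (Real.exp_pos 1) (by linarith)

lemma log_exp_one_add_pos {t : ℝ} (ht : 0 ≤ t) : 0 < Real.log (Real.exp 1 + t) :=
  one_pos.trans_le (one_le_log_exp_one_add ht)

lemma psi0_nonneg {t : ℝ} (ht : 0 ≤ t) : 0 ≤ psi0 t :=
  div_nonneg ht (log_exp_one_add_pos ht).le

/-- Concavity of `log` between `e` and `e + M`, using `log e = 1 ≥ 0`. -/
lemma div_mul_log_exp_one_add_le {s M : ℝ} (hs : 0 ≤ s) (hsM : s ≤ M) (hM : 0 < M) :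
    s / M * Real.log (Real.exp 1 + M) ≤ Real.log (Real.exp 1 + s) := by
  have hr : s / M ≤ 1 := (div_le_one hM).2 hsM
  have hconc := strictConcaveOn_log_Ioi.concaveOn.2
    (show Real.exp 1 + M ∈ Ioi 0 by simp only [mem_Ioi]; positivity)
    (show Real.exp 1 ∈ Ioi 0 from Real.exp_pos 1)
    (div_nonneg hs hM.le) (sub_nonneg.2 hr) (add_sub_cancel _ _)
  have hpt : s / M * (Real.exp 1 + M) + (1 - s / M) * Real.exp 1 = Real.exp 1 + s := by
    field_simp; ring
  simp only [smul_eq_mul, Real.log_exp, hpt] at hconc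
  nlinarith

lemma monotoneOn_psi0 : MonotoneOn psi0 (Ici 0) := by
  intro s hs M hM hsM
  rcases (mem_Ici.1 hs).eq_or_lt with rfl | hs0
  · simpa [psi0] using psi0_nonneg hM
  have hM0 : 0 < M := hs0.trans_le hsM
  rw [psi0, psi0, div_le_div_iff₀ (log_exp_one_add_pos hs) (log_exp_one_add_pos hM)]
  have := div_mul_log_exp_one_add_le hs0.le hsM hM0
  rw [div_mul_eq_mul_div, div_le_iff₀ hM0] at this
  linarith

/-- Below `M` use monotonicity; above `M` the denominator `log (e + s)` only grows. -/
lemma psi0_le_add {s M : ℝ} (hs : 0 ≤ s) (hM : 0 ≤ M) :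
    psi0 s ≤ psi0 M + s / Real.log (Real.exp 1 + M) := by
  have hLM := log_exp_one_add_pos hM
  rcases le_total s M with hsM | hMs
  · linarith [monotoneOn_psi0 hs hM hsM, div_nonneg hs hLM.le]
  · have : psi0 s ≤ s / Real.log (Real.exp 1 + M) :=
      div_le_div_of_nonneg_left hs hLM (Real.log_le_log (by positivity) (by linarith))
    linarith [psi0_nonneg hM]

lemma psi0E_le_add {M : ℝ} (hM : 0 ≤ M) (s : ℝ≥0∞) :
    psi0E s ≤ ENNReal.ofReal (psi0 M) + s / ENNReal.ofReal (Real.log (Real.exp 1 + M)) := by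
  have hLM := log_exp_one_add_pos hM
  rcases eq_or_ne s ⊤ with rfl | hs
  · rw [ENNReal.top_div_of_ne_top ENNReal.ofReal_ne_top]
    exact le_top
  · have hps : psi0E s = ENNReal.ofReal (psi0 s.toReal) := by
      rw [psi0E, psi0, ENNReal.ofReal_div_of_pos (log_exp_one_add_pos toReal_nonneg),
        ENNReal.ofReal_toReal hs]
    rw [hps, ← ENNReal.ofReal_toReal hs, ← ENNReal.ofReal_div_of_pos hLM,
      ← ENNReal.ofReal_add (psi0_nonneg hM) (div_nonneg toReal_nonneg hLM.le),
      ENNReal.toReal_ofReal toReal_nonneg]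
    exact ENNReal.ofReal_le_ofReal (psi0_le_add toReal_nonneg hM)

lemma setLIntegral_psi0E_le {α : Type*} [MeasurableSpace α] {μ : Measure α} {s : Set α}
    {g : α → ℝ≥0∞} {M : ℝ} (hM : 0 ≤ M) (hg : ∫⁻ x in s, g x ∂μ ≤ ENNReal.ofReal M * μ s) :
    ∫⁻ x in s, psi0E (g x) ∂μ ≤ 2 * ENNReal.ofReal (psi0 M) * μ s := by
  have hlog := log_exp_one_add_pos hM
  set L := ENNReal.ofReal (Real.log (Real.exp 1 + M))
  calc ∫⁻ x in s, psi0E (g x) ∂μ ≤ ∫⁻ x in s, (ENNReal.ofReal (psi0 M) + g x * L⁻¹) ∂μ :=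
        lintegral_mono fun x => by simpa only [div_eq_mul_inv] using psi0E_le_add hM (g x)
    _ = ENNReal.ofReal (psi0 M) * μ s + (∫⁻ x in s, g x ∂μ) * L⁻¹ := by
        rw [lintegral_add_left measurable_const, setLIntegral_const,
          lintegral_mul_const' _ _ (ENNReal.inv_ne_top.2 (ENNReal.ofReal_pos.2 hlog).ne')]
    _ ≤ ENNReal.ofReal (psi0 M) * μ s + ENNReal.ofReal M * μ s * L⁻¹ := by gcongr
    _ = 2 * ENNReal.ofReal (psi0 M) * μ s := by
        rw [psi0, ENNReal.ofReal_div_of_pos hlog, div_eq_mul_inv]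
        ring

lemma arcLen_pos (k : ℕ) : 0 < arcLen k := by
  unfold arcLen; positivity

lemma arcLen_succ (k : ℕ) : arcLen (k + 1) = arcLen k / 2 := by
  unfold arcLen; rw [pow_succ]; ring

lemma measurableSet_arc (δ : ℝ) (k m : ℕ) : MeasurableSet (arc δ k m) := measurableSet_Ico

lemma volume_arc (δ : ℝ) (k m : ℕ) : volume (arc δ k m) = ENNReal.ofReal (arcLen k) := by
  rw [arc, Real.volume_Ico, add_sub_cancel_left]

lemma arcStart_add_arcLen (δ : ℝ) (k m : ℕ) :
    arcStart δ k m + arcLen k = arcStart δ k (m + 1) := by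
  unfold arcStart arcLen; push_cast; ring

lemma arcStart_mono (δ : ℝ) (k : ℕ) : Monotone (arcStart δ k) := by
  intro a b hab
  unfold arcStart
  gcongr

lemma arcStart_succ_two_mul (δ : ℝ) (k m : ℕ) : arcStart δ (k + 1) (2 * m) = arcStart δ k m := by
  unfold arcStart; rw [pow_succ]; push_cast; field_simp

lemma arc_succ_two_mul (δ : ℝ) (k m : ℕ) :
    arc δ (k + 1) (2 * m) = Ico (arcStart δ k m) (arcStart δ k m + arcLen k / 2) := by
  rw [arc, arcLen_succ, arcStart_succ_two_mul]

lemma arc_succ_two_mul_add_one (δ : ℝ) (k m : ℕ) :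
    arc δ (k + 1) (2 * m + 1) =
      Ico (arcStart δ k m + arcLen k / 2) (arcStart δ k m + arcLen k) := by
  have hstart : arcStart δ (k + 1) (2 * m + 1) = arcStart δ k m + arcLen k / 2 := by
    rw [← arcStart_add_arcLen, arcStart_succ_two_mul, arcLen_succ]
  rw [arc, hstart, arcLen_succ, add_assoc, add_halves]

lemma arc_eq_union (δ : ℝ) (k m : ℕ) :
    arc δ k m = arc δ (k + 1) (2 * m) ∪ arc δ (k + 1) (2 * m + 1) := by
  rw [arc_succ_two_mul, arc_succ_two_mul_add_one, arc,
    Ico_union_Ico_eq_Ico] <;> linarith [arcLen_pos k]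

lemma arc_subset_torus (δ : ℝ) {k m : ℕ} (hm : m < 2 ^ k) : arc δ k m ⊆ torus δ := by
  have htop : arcStart δ k (2 ^ k) = 2 * π * δ + 2 * π := by
    unfold arcStart; push_cast; field_simp; ring
  refine Ico_subset_Ico ?_ ?_
  · simpa [arcStart] using arcStart_mono δ k (Nat.zero_le m)
  · rw [arcStart_add_arcLen, ← htop]
    exact arcStart_mono δ k hm

lemma arc_eq_Ico (δ : ℝ) (k m : ℕ) : arc δ k m = Ico (arcStart δ k m) (arcStart δ k (m + 1)) := by
  rw [arc, arcStart_add_arcLen]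

lemma pairwise_disjoint_arc (δ : ℝ) (k : ℕ) : Pairwise (Disjoint on arc δ k) := by
  rw [show arc δ k = _ from funext (arc_eq_Ico δ k)]
  simpa only [Order.succ_eq_add_one] using (arcStart_mono δ k).pairwise_disjoint_on_Ico_succ

lemma sq_lintegral_le {α : Type*} [MeasurableSpace α] (μ : Measure α) {g : α → ℝ≥0∞}
    (hg : AEMeasurable g μ) : (∫⁻ x, g x ∂μ) ^ 2 ≤ μ univ * ∫⁻ x, g x ^ 2 ∂μ := by
  have h := ENNReal.lintegral_mul_le_Lp_mul_Lq μ Real.HolderConjugate.two_two hg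
    (aemeasurable_const (b := 1))
  simp only [Pi.mul_apply, mul_one, ENNReal.one_rpow, lintegral_const, one_mul] at h
  have hsqrt : ∀ a : ℝ≥0∞, (a ^ (1 / 2 : ℝ)) ^ 2 = a := fun a => by
    rw [← ENNReal.rpow_natCast, ← ENNReal.rpow_mul]; norm_num
  calc (∫⁻ x, g x ∂μ) ^ 2
      ≤ ((∫⁻ x, g x ^ (2 : ℝ) ∂μ) ^ (1 / 2 : ℝ) * μ univ ^ (1 / 2 : ℝ)) ^ 2 := by gcongr
    _ = μ univ * ∫⁻ x, g x ^ 2 ∂μ := by simp only [mul_pow, hsqrt, ENNReal.rpow_two, mul_comm]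

lemma ofReal_sq_integral_le {α : Type*} [MeasurableSpace α] {μ : Measure α} {f : α → ℝ}
    (hf : AEStronglyMeasurable f μ) :
    ENNReal.ofReal ((∫ x, f x ∂μ) ^ 2) ≤ μ univ * ∫⁻ x, ‖f x‖ₑ ^ 2 ∂μ := by
  rw [← sq_abs, ENNReal.ofReal_pow (abs_nonneg _), ← Real.enorm_eq_ofReal_abs]
  exact (pow_le_pow_left₀ bot_le (enorm_integral_le_lintegral_enorm f) 2).trans
    (sq_lintegral_le μ hf.enorm)

def arcIntegral (δ : ℝ) (f : ℝ → ℝ) (k m : ℕ) : ℝ := ∫ x in arc δ k m, f x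

/-- `‖𝔼_k f‖₂²`, the squared `L²` norm of the averages of `f` over the arcs of generation `k`. -/
def dyadicEnergy (δ : ℝ) (f : ℝ → ℝ) (k : ℕ) : ℝ :=
  ∑ m ∈ Finset.range (2 ^ k), arcIntegral δ f k m ^ 2 / arcLen k

section Bessel

variable {δ : ℝ} {f : ℝ → ℝ}

lemma haarCoeff_eq_sub (hf : IntegrableOn f (torus δ)) {k m : ℕ} (hm : m < 2 ^ k) :
    haarCoeff δ k m f = arcLen k ^ (-(1 : ℝ) / 2) *
      (arcIntegral δ f (k + 1) (2 * m) - arcIntegral δ f (k + 1) (2 * m + 1)) := by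
  have hL := arc_subset_torus δ (show 2 * m < 2 ^ (k + 1) by omega)
  have hR := arc_subset_torus δ (show 2 * m + 1 < 2 ^ (k + 1) by omega)
  have hpt : ∀ θ, f θ * haar δ k m θ = arcLen k ^ (-(1 : ℝ) / 2) *
      ((arc δ (k + 1) (2 * m)).indicator f θ - (arc δ (k + 1) (2 * m + 1)).indicator f θ) := by
    intro θ
    simp only [haar]
    rw [← arc_succ_two_mul, ← arc_succ_two_mul_add_one]
    simp only [indicator]
    split_ifs <;> ring
  simp_rw [haarCoeff, hpt]
  rw [integral_const_mul, integral_sub (hf.indicator (measurableSet_arc ..))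
      (hf.indicator (measurableSet_arc ..)), setIntegral_indicator (measurableSet_arc ..),
    setIntegral_indicator (measurableSet_arc ..), inter_eq_self_of_subset_right hL,
    inter_eq_self_of_subset_right hR, arcIntegral, arcIntegral]

lemma arcIntegral_eq_add (hf : IntegrableOn f (torus δ)) {k m : ℕ} (hm : m < 2 ^ k) :
    arcIntegral δ f k m =
      arcIntegral δ f (k + 1) (2 * m) + arcIntegral δ f (k + 1) (2 * m + 1) := by
  have hL := arc_subset_torus δ (show 2 * m < 2 ^ (k + 1) by omega)
  have hR := arc_subset_torus δ (show 2 * m + 1 < 2 ^ (k + 1) by omega)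
  rw [arcIntegral, arc_eq_union, setIntegral_union (pairwise_disjoint_arc δ (k + 1) (by omega))
    (measurableSet_arc ..) (hf.mono_set hL) (hf.mono_set hR)]
  rfl

lemma sq_haarCoeff_eq (hf : IntegrableOn f (torus δ)) {k m : ℕ} (hm : m < 2 ^ k) :
    haarCoeff δ k m f ^ 2 =
      (arcIntegral δ f (k + 1) (2 * m) ^ 2 + arcIntegral δ f (k + 1) (2 * m + 1) ^ 2) /
        arcLen (k + 1) - arcIntegral δ f k m ^ 2 / arcLen k := by
  have hl := arcLen_pos k
  have hc : (arcLen k ^ (-(1 : ℝ) / 2)) ^ 2 = (arcLen k)⁻¹ := by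
    rw [← Real.rpow_natCast, ← Real.rpow_mul hl.le]
    norm_num [Real.rpow_neg_one]
  rw [haarCoeff_eq_sub hf hm, mul_pow, hc, arcIntegral_eq_add hf hm, arcLen_succ]
  field_simp
  ring

lemma sum_range_two_mul {M : Type*} [AddCommMonoid M] (g : ℕ → M) (n : ℕ) :
    ∑ i ∈ Finset.range (2 * n), g i = ∑ i ∈ Finset.range n, (g (2 * i) + g (2 * i + 1)) := by
  induction n with
  | zero => simp
  | succ n ih =>
    rw [show 2 * (n + 1) = 2 * n + 1 + 1 by ring, Finset.sum_range_succ, Finset.sum_range_succ, ih,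
      Finset.sum_range_succ, add_assoc]

lemma sum_sq_haarCoeff_eq (hf : IntegrableOn f (torus δ)) (k : ℕ) :
    ∑ m ∈ Finset.range (2 ^ k), haarCoeff δ k m f ^ 2 =
      dyadicEnergy δ f (k + 1) - dyadicEnergy δ f k := by
  rw [dyadicEnergy, dyadicEnergy, pow_succ', sum_range_two_mul, ← Finset.sum_sub_distrib]
  refine Finset.sum_congr rfl fun m hm => ?_
  rw [sq_haarCoeff_eq hf (Finset.mem_range.1 hm), add_div]

lemma dyadicEnergy_nonneg (k : ℕ) : 0 ≤ dyadicEnergy δ f k :=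
  Finset.sum_nonneg fun _ _ => div_nonneg (sq_nonneg _) (arcLen_pos k).le

lemma ofReal_dyadicEnergy_le (hf : IntegrableOn f (torus δ)) (k : ℕ) :
    ENNReal.ofReal (dyadicEnergy δ f k) ≤ ∫⁻ x in torus δ, ‖f x‖ₑ ^ 2 := by
  have harc : ∀ m ∈ Finset.range (2 ^ k),
      ENNReal.ofReal (arcIntegral δ f k m ^ 2 / arcLen k) ≤ ∫⁻ x in arc δ k m, ‖f x‖ₑ ^ 2 := by
    intro m hm
    have hsub := arc_subset_torus δ (Finset.mem_range.1 hm)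
    rw [ENNReal.ofReal_div_of_pos (arcLen_pos k)]
    refine ENNReal.div_le_of_le_mul ?_
    rw [mul_comm, ← volume_arc, ← Measure.restrict_apply_univ]
    exact ofReal_sq_integral_le (hf.mono_set hsub).aestronglyMeasurable
  calc ENNReal.ofReal (dyadicEnergy δ f k)
      = ∑ m ∈ Finset.range (2 ^ k), ENNReal.ofReal (arcIntegral δ f k m ^ 2 / arcLen k) :=
        ENNReal.ofReal_sum_of_nonneg fun _ _ => div_nonneg (sq_nonneg _) (arcLen_pos k).le
    _ ≤ ∑ m ∈ Finset.range (2 ^ k), ∫⁻ x in arc δ k m, ‖f x‖ₑ ^ 2 := Finset.sum_le_sum harc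
    _ = ∫⁻ x in ⋃ m ∈ Finset.range (2 ^ k), arc δ k m, ‖f x‖ₑ ^ 2 :=
        (lintegral_biUnion_finset (fun _ _ _ _ h => pairwise_disjoint_arc δ k h)
          (fun _ _ => measurableSet_arc ..) _).symm
    _ ≤ ∫⁻ x in torus δ, ‖f x‖ₑ ^ 2 :=
        lintegral_mono_set (iUnion₂_subset fun _ hm => arc_subset_torus δ (Finset.mem_range.1 hm))

lemma tsum_sq_haarCoeff_le (hf : IntegrableOn f (torus δ)) :
    ∑' (k : ℕ) (m : Fin (2 ^ k)), (‖haarCoeff δ k m f‖₊ : ℝ≥0∞) ^ 2 ≤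
      ∫⁻ x in torus δ, ‖f x‖ₑ ^ 2 := by
  have hgen : ∀ k, ∑' m : Fin (2 ^ k), (‖haarCoeff δ k m f‖₊ : ℝ≥0∞) ^ 2 =
      ENNReal.ofReal (∑ m ∈ Finset.range (2 ^ k), haarCoeff δ k m f ^ 2) := fun k => by
    rw [tsum_fintype, ENNReal.ofReal_sum_of_nonneg fun _ _ => sq_nonneg _,
      ← Fin.sum_univ_eq_sum_range (fun m => ENNReal.ofReal (haarCoeff δ k m f ^ 2))]
    refine Finset.sum_congr rfl fun m _ => ?_
    rw [← enorm_eq_nnnorm, Real.enorm_eq_ofReal_abs, ← ENNReal.ofReal_pow (abs_nonneg _), sq_abs]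
  simp_rw [hgen]
  refine ENNReal.tsum_le_of_sum_range_le fun K => ?_
  rw [← ENNReal.ofReal_sum_of_nonneg fun _ _ => Finset.sum_nonneg fun _ _ => sq_nonneg _]
  simp_rw [sum_sq_haarCoeff_eq hf]
  rw [Finset.sum_range_sub (dyadicEnergy δ f)]
  exact (ENNReal.ofReal_le_ofReal (sub_le_self _ (dyadicEnergy_nonneg 0))).trans
    (ofReal_dyadicEnergy_le hf K)

end Bessel

lemma integrableOn_of_einfNorm_lt_top {f : ℝ → ℝ} {s : Set ℝ} (hs : volume s ≠ ⊤)
    (hmeas : Measurable f) (hbd : einfNorm f < ⊤) : IntegrableOn f s := by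
  have hmem : MemLp f ⊤ volume := ⟨hmeas.aestronglyMeasurable, by rwa [eLpNorm_exponent_top]⟩
  have := isFiniteMeasure_restrict.2 hs
  exact (hmem.restrict s).integrable le_top

lemma lintegral_enorm_sq_le_of_support_subset {f : ℝ → ℝ} {s : Set ℝ} (hsupp : support f ⊆ s) :
    ∫⁻ x, ‖f x‖ₑ ^ 2 ≤ einfNorm f ^ 2 * volume s := by
  have hsupp2 : support (fun x => ‖f x‖ₑ ^ 2) ⊆ s := fun x hx =>
    hsupp fun hfx => hx (by simp [hfx])
  calc ∫⁻ x, ‖f x‖ₑ ^ 2 = ∫⁻ x in s, ‖f x‖ₑ ^ 2 := (setLIntegral_eq_of_support_subset hsupp2).symm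
    _ ≤ ∫⁻ _ in s, einfNorm f ^ 2 :=
        lintegral_mono_ae <| (ae_restrict_of_ae (ae_le_essSup _)).mono fun _ hx =>
          pow_le_pow_left' hx 2
    _ = einfNorm f ^ 2 * volume s := by rw [lintegral_const, Measure.restrict_apply_univ]

lemma sqFn_sq (δ : ℝ) (f : ℝ → ℝ) (θ : ℝ) : sqFn δ f θ ^ 2 = ∑' (k : ℕ) (m : Fin (2 ^ k)),
    (‖haarCoeff δ k m f‖₊ : ℝ≥0∞) ^ 2 *
      (arc δ k m).indicator (fun _ => (ENNReal.ofReal (arcLen k))⁻¹) θ := by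
  rw [sqFn, ← ENNReal.rpow_natCast, ← ENNReal.rpow_mul]
  norm_num

lemma measurable_sqFn (δ : ℝ) (f : ℝ → ℝ) : Measurable (sqFn δ f) :=
  (Measurable.tsum fun _ => Measurable.tsum fun _ =>
    (measurable_const.indicator (measurableSet_arc ..)).const_mul _).pow_const _

lemma lintegral_torus_sqFn_sq (δ : ℝ) (f : ℝ → ℝ) :
    ∫⁻ θ in torus δ, sqFn δ f θ ^ 2 =
      ∑' (k : ℕ) (m : Fin (2 ^ k)), (‖haarCoeff δ k m f‖₊ : ℝ≥0∞) ^ 2 := by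
  have hterm : ∀ (k : ℕ) (m : Fin (2 ^ k)), Measurable fun θ =>
      (‖haarCoeff δ k m f‖₊ : ℝ≥0∞) ^ 2 *
        (arc δ k m).indicator (fun _ => (ENNReal.ofReal (arcLen k))⁻¹) θ :=
    fun _ _ => (measurable_const.indicator (measurableSet_arc ..)).const_mul _
  simp_rw [sqFn_sq]
  rw [lintegral_tsum fun k => (Measurable.tsum (hterm k)).aemeasurable]
  refine tsum_congr fun k => ?_
  rw [lintegral_tsum fun m => (hterm k m).aemeasurable]
  refine tsum_congr fun m => ?_
  rw [lintegral_const_mul _ (measurable_const.indicator (measurableSet_arc ..)),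
    lintegral_indicator_const (measurableSet_arc ..), Measure.restrict_apply (measurableSet_arc ..),
    inter_eq_left.2 (arc_subset_torus δ m.isLt), volume_arc,
    ENNReal.inv_mul_cancel (ENNReal.ofReal_pos.2 (arcLen_pos k)).ne' ENNReal.ofReal_ne_top, mul_one]

lemma lintegral_arc_sqFn_le {δ : ℝ} {f : ℝ → ℝ} {k m : ℕ} (hm : m < 2 ^ k) (hmeas : Measurable f)
    (hsupp : support f ⊆ arc δ k m) (hbd : einfNorm f < ⊤) :
    ∫⁻ θ in arc δ k m, sqFn δ f θ ≤ einfNorm f * ENNReal.ofReal (arcLen k) := by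
  have hf : IntegrableOn f (torus δ) := integrableOn_of_einfNorm_lt_top
    (by rw [torus, Real.volume_Ico]; exact ENNReal.ofReal_ne_top) hmeas hbd
  have hL2 : ∫⁻ x in torus δ, ‖f x‖ₑ ^ 2 ≤ einfNorm f ^ 2 * ENNReal.ofReal (arcLen k) := by
    rw [← volume_arc]
    exact setLIntegral_le_lintegral _ _ |>.trans (lintegral_enorm_sq_le_of_support_subset hsupp)
  refine (ENNReal.pow_le_pow_left_iff two_ne_zero).1 ?_
  calc (∫⁻ θ in arc δ k m, sqFn δ f θ) ^ 2
      ≤ ENNReal.ofReal (arcLen k) * ∫⁻ θ in arc δ k m, sqFn δ f θ ^ 2 := by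
        simpa only [Measure.restrict_apply_univ, volume_arc] using
          sq_lintegral_le (volume.restrict (arc δ k m)) (measurable_sqFn δ f).aemeasurable
    _ ≤ ENNReal.ofReal (arcLen k) * ∫⁻ θ in torus δ, sqFn δ f θ ^ 2 := by
        gcongr; exact arc_subset_torus δ hm
    _ ≤ ENNReal.ofReal (arcLen k) * (einfNorm f ^ 2 * ENNReal.ofReal (arcLen k)) := by
        rw [lintegral_torus_sqFn_sq]
        gcongr
        exact (tsum_sq_haarCoeff_le hf).trans hL2
    _ = (einfNorm f * ENNReal.ofReal (arcLen k)) ^ 2 := by ring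

theorem stmt9_general (δ : ℝ) (k m : ℕ) (hm : m < 2 ^ k)
    (β : ℝ → ℝ) (hmeas : Measurable β) (hsupp : Function.support β ⊆ arc δ k m)
    (hbd : einfNorm β < ⊤) :
    (∫⁻ θ in arc δ k m, psi0E (sqFn δ β θ)) ≤
      ENNReal.ofReal ((1 + Real.sqrt (2 * π)) * arcLen k * psi0 ((einfNorm β).toReal)) := by
  set M := (einfNorm β).toReal
  have hM : 0 ≤ M := toReal_nonneg
  have hS : ∫⁻ θ in arc δ k m, sqFn δ β θ ≤ ENNReal.ofReal M * volume (arc δ k m) := by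
    rw [ENNReal.ofReal_toReal hbd.ne, volume_arc]
    exact lintegral_arc_sqFn_le hm hmeas hsupp hbd
  have hsqrt : 1 ≤ Real.sqrt (2 * π) := Real.one_le_sqrt.2 (by linarith [pi_gt_three])
  calc ∫⁻ θ in arc δ k m, psi0E (sqFn δ β θ)
      ≤ 2 * ENNReal.ofReal (psi0 M) * volume (arc δ k m) := setLIntegral_psi0E_le hM hS
    _ = ENNReal.ofReal (2 * arcLen k * psi0 M) := by
        rw [volume_arc, ← ENNReal.ofReal_ofNat, ← ENNReal.ofReal_mul zero_le_two,
          ← ENNReal.ofReal_mul (mul_nonneg zero_le_two (psi0_nonneg hM))]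
        ring_nf
    _ ≤ ENNReal.ofReal ((1 + Real.sqrt (2 * π)) * arcLen k * psi0 M) :=
        ENNReal.ofReal_le_ofReal <| mul_le_mul_of_nonneg_right
          (mul_le_mul_of_nonneg_right (by linarith) (arcLen_pos k).le) (psi0_nonneg hM)

/-- For an `L^∞` function `β` supported in a dyadic arc `I`,
`∫_I Ψ₀(S_𝓘[β]) ≤ (1 + √(2π)) |I| Ψ₀(‖β‖_∞)`. -/
theorem stmt9 (δ : ℝ) (hδ0 : 0 ≤ δ) (hδ1 : δ < 1) (k m : ℕ) (hm : m < 2 ^ k)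
    (β : ℝ → ℝ) (hmeas : Measurable β) (hsupp : Function.support β ⊆ arc δ k m)
    (hbd : einfNorm β < ⊤) :
    (∫⁻ θ in arc δ k m, psi0E (sqFn δ β θ)) ≤
      ENNReal.ofReal ((1 + Real.sqrt (2 * π)) * arcLen k * psi0 ((einfNorm β).toReal)) :=
  stmt9_general δ k m hm β hmeas hsupp hbd

end
end

section
/- Let (c_n)_{n∈ℤ} be complex numbers such that there exists A > 0 with |c_n| ≤ A(1 + |n|) for all n ∈ ℤ, and such that Σ_{n ∈ ℤ∖{0}} Ψ₀(|n c_n|) / n² < ∞. Then Σ_{n ∈ ℤ∖{0}} |c_n| / (|n| log(e + |n|)) < ∞. (Applied to the Fourier coefficients of a distribution in H^log(𝕋), this yields the convergence of Σ_{n≠0} |f̂(n)| / (|n| log(e+|n|)).) -/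
open ENNReal

noncomputable section

lemma key_real_stmt19 (A : ℝ) (hA : 0 < A) (x r : ℝ) (hx : 1 ≤ x) (hr : 0 ≤ r)
    (hbd : r ≤ A * (1 + x)) :
    r / (x * Real.log (Real.exp 1 + x))
      ≤ (2 + Real.log (1 + A)) * (psi0 (x * r) / x ^ 2) := by
  set C := 2 + Real.log (1 + A) with hC
  have hlA : 0 ≤ Real.log (1 + A) := Real.log_nonneg (by linarith)
  have hC1 : 1 ≤ C := by rw [hC]; linarith
  have he : (1:ℝ) < Real.exp 1 := by
    have := Real.exp_one_gt_d9; linarith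
  have hx0 : (0:ℝ) < x := by linarith
  have hxr : 0 ≤ x * r := mul_nonneg hx0.le hr
  have hex : 1 < Real.exp 1 + x := by linarith
  have hexr : 1 < Real.exp 1 + x * r := by linarith
  have hL1 : 1 ≤ Real.log (Real.exp 1 + x) :=
    (Real.le_log_iff_exp_le (by linarith)).2 (by simp; linarith)
  have hL2 : 0 < Real.log (Real.exp 1 + x * r) := Real.log_pos hexr
  have hkey : Real.log (Real.exp 1 + x * r) ≤ C * Real.log (Real.exp 1 + x) := by
    have h1 : Real.exp 1 + x * r ≤ (1 + A) * (Real.exp 1 + x) ^ 2 := by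
      nlinarith [mul_le_mul_of_nonneg_left hbd hx0.le,
        mul_nonneg (mul_nonneg hA.le hx0.le) (by linarith : (0:ℝ) ≤ 2*Real.exp 1 - 1),
        sq_nonneg (Real.exp 1 - 1)]
    calc Real.log (Real.exp 1 + x * r) ≤ Real.log ((1 + A) * (Real.exp 1 + x) ^ 2) :=
          Real.log_le_log (by linarith) h1
      _ = Real.log (1 + A) + 2 * Real.log (Real.exp 1 + x) := by
          rw [Real.log_mul (by linarith) (by positivity), Real.log_pow]; ring
      _ ≤ C * Real.log (Real.exp 1 + x) := by
          rw [hC]; nlinarith [mul_le_mul_of_nonneg_left hL1 hlA]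
  rw [psi0]
  have hR : C * (x * r / Real.log (Real.exp 1 + x * r) / x ^ 2)
      = (C * r) / (x * Real.log (Real.exp 1 + x * r)) := by
    field_simp
  rw [hR, div_le_div_iff₀ (by positivity) (by positivity)]
  nlinarith [mul_le_mul_of_nonneg_left hkey (mul_nonneg hr hx0.le)]

/-- If `|c_n| ≤ A(1+|n|)` and `Σ_{n≠0} Ψ₀(|n c_n|)/n² < ∞`, then
`Σ_{n≠0} |c_n|/(|n| log(e+|n|)) < ∞`. -/
theorem stmt19 (c : ℤ → ℂ) (A : ℝ) (hA : 0 < A)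
    (hbd : ∀ n : ℤ, ‖c n‖ ≤ A * (1 + |(n : ℝ)|))
    (hsum : (∑' n : ℤ, (if n = 0 then 0 else
        ENNReal.ofReal (psi0 ‖(n : ℂ) * c n‖ / (n : ℝ) ^ 2))) < ⊤) :
    (∑' n : ℤ, (if n = 0 then 0 else
        ENNReal.ofReal (‖c n‖ / (|(n : ℝ)| * Real.log (Real.exp 1 + |(n : ℝ)|))))) < ⊤ := by
  set C := 2 + Real.log (1 + A) with hC
  have hC0 : 0 ≤ C := by
    have : 0 ≤ Real.log (1 + A) := Real.log_nonneg (by linarith)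
    rw [hC]; linarith
  have key : ∀ n : ℤ, (if n = 0 then 0 else
        ENNReal.ofReal (‖c n‖ / (|(n:ℝ)| * Real.log (Real.exp 1 + |(n:ℝ)|))))
      ≤ ENNReal.ofReal C * (if n = 0 then 0 else
        ENNReal.ofReal (psi0 ‖(n:ℂ) * c n‖ / (n:ℝ) ^ 2)) := by
    intro n
    by_cases hn : n = 0
    · simp [hn]
    · simp only [if_neg hn]
      rw [← ENNReal.ofReal_mul hC0]
      apply ENNReal.ofReal_le_ofReal
      have hx : (1:ℝ) ≤ |(n:ℝ)| := by
        rw [← Int.cast_abs]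
        exact_mod_cast Int.one_le_abs hn
      have h1 : ‖(n:ℂ) * c n‖ = |(n:ℝ)| * ‖c n‖ := by
        rw [norm_mul]
        norm_num
      have h2 : ((n:ℝ))^2 = |(n:ℝ)|^2 := (sq_abs _).symm
      rw [h1, h2]
      exact key_real_stmt19 A hA _ _ hx (norm_nonneg _) (hbd n)
  calc (∑' n : ℤ, (if n = 0 then 0 else
        ENNReal.ofReal (‖c n‖ / (|(n:ℝ)| * Real.log (Real.exp 1 + |(n:ℝ)|)))))
      ≤ ∑' n : ℤ, ENNReal.ofReal C * (if n = 0 then 0 else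
        ENNReal.ofReal (psi0 ‖(n:ℂ) * c n‖ / (n:ℝ) ^ 2)) := ENNReal.tsum_le_tsum key
    _ = ENNReal.ofReal C * ∑' n : ℤ, (if n = 0 then 0 else
        ENNReal.ofReal (psi0 ‖(n:ℂ) * c n‖ / (n:ℝ) ^ 2)) := ENNReal.tsum_mul_left
    _ < ⊤ := ENNReal.mul_lt_top ENNReal.ofReal_lt_top hsum

end
end
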